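/- arXiv:1601.06411 — 9 statements merged into one kernel-verified Lean document; each statement's English description precedes it below -/
import Mathlib

section
/- Let H be a separable Hilbert space (over ℝ or ℂ) and let Φ = {φ_n}_{n∈I} be a frame for H. If Φ does phase retrieval, then Φ has the complement property. -/
/-!
If neither span is dense, pick nonzero `u ⊥ φ '' S` and `v ⊥ φ '' Sᶜ`. Then `u + v` and `u - v`
have the same measurements, so `u + v = α • (u - v)`, i.e. `(1 - α) • u = -((1 + α) • v)`.
Either `α = 1` and `v = 0`, or `u` is a multiple of `v`; then `u` is orthogonal to every `φ n`,
which phase retrieval (comparing `u` with `0`) forbids for `u ≠ 0`.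
-/

open Submodule

section

variable {𝕜 H I : Type*} [RCLike 𝕜] [NormedAddCommGroup H] [InnerProductSpace 𝕜 H]

variable (𝕜) in
def PhaseRetrieval (φ : I → H) : Prop :=
  ∀ f g : H, (∀ n, ‖(inner 𝕜 f (φ n) : 𝕜)‖ = ‖(inner 𝕜 g (φ n) : 𝕜)‖) →
    ∃ α : 𝕜, ‖α‖ = 1 ∧ f = α • g

variable (𝕜) in
def ComplementProperty (φ : I → H) : Prop :=
  ∀ S : Set I,
    (span 𝕜 (φ '' S)).topologicalClosure = ⊤ ∨ (span 𝕜 (φ '' Sᶜ)).topologicalClosure = ⊤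

theorem exists_mem_orthogonal_ne_zero_of_topologicalClosure_ne_top [CompleteSpace H]
    {K : Submodule 𝕜 H} (hK : K.topologicalClosure ≠ ⊤) : ∃ u ∈ Kᗮ, u ≠ 0 :=
  exists_mem_ne_zero_of_ne_bot (mt topologicalClosure_eq_top_iff.mpr hK)

theorem inner_eq_zero_of_mem_orthogonal_span_image {φ : I → H} {S : Set I} {u : H}
    (hu : u ∈ (span 𝕜 (φ '' S))ᗮ) {n : I} (hn : n ∈ S) : (inner 𝕜 u (φ n) : 𝕜) = 0 :=
  inner_left_of_mem_orthogonal (subset_span (Set.mem_image_of_mem φ hn)) hu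

theorem norm_inner_add_eq_norm_inner_sub_of_inner_eq_zero {φ : I → H} {S : Set I} {u v : H}
    (hu : ∀ n ∈ S, (inner 𝕜 u (φ n) : 𝕜) = 0) (hv : ∀ n ∉ S, (inner 𝕜 v (φ n) : 𝕜) = 0)
    (n : I) : ‖(inner 𝕜 (u + v) (φ n) : 𝕜)‖ = ‖(inner 𝕜 (u - v) (φ n) : 𝕜)‖ := by
  rw [inner_add_left, inner_sub_left]
  by_cases hn : n ∈ S
  · simp [hu n hn]
  · simp [hv n hn]

namespace PhaseRetrieval

variable {φ : I → H}

theorem eq_zero_of_forall_inner_eq_zero (hφ : PhaseRetrieval 𝕜 φ) {x : H}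
    (hx : ∀ n, (inner 𝕜 x (φ n) : 𝕜) = 0) : x = 0 := by
  obtain ⟨α, -, hα⟩ := hφ x 0 (by simp [hx])
  simpa using hα

theorem eq_zero_or_eq_zero_of_inner_eq_zero (hφ : PhaseRetrieval 𝕜 φ) {S : Set I} {u v : H}
    (hu : ∀ n ∈ S, (inner 𝕜 u (φ n) : 𝕜) = 0) (hv : ∀ n ∉ S, (inner 𝕜 v (φ n) : 𝕜) = 0) :
    u = 0 ∨ v = 0 := by
  obtain ⟨α, -, hα⟩ := hφ (u + v) (u - v)
    (norm_inner_add_eq_norm_inner_sub_of_inner_eq_zero hu hv)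
  have key : (1 - α) • u = -((1 + α) • v) := by
    linear_combination (norm := module) hα
  by_cases h1 : α = 1
  · right
    subst h1
    rw [sub_self, zero_smul, one_add_one_eq_two, eq_comm, neg_eq_zero] at key
    exact (smul_eq_zero.mp key).resolve_left two_ne_zero
  · left
    have huv : u = ((1 - α)⁻¹ * -(1 + α)) • v := by
      rw [mul_smul, neg_smul, ← key, inv_smul_smul₀ (sub_ne_zero.mpr (Ne.symm h1))]
    refine hφ.eq_zero_of_forall_inner_eq_zero fun n => ?_
    by_cases hn : n ∈ S
    · exact hu n hn
    · rw [huv, inner_smul_left, hv n hn, mul_zero]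

theorem complementProperty [CompleteSpace H] (hφ : PhaseRetrieval 𝕜 φ) :
    ComplementProperty 𝕜 φ := by
  intro S
  by_contra! ⟨hS, hSc⟩
  obtain ⟨u, hu, hu0⟩ := exists_mem_orthogonal_ne_zero_of_topologicalClosure_ne_top hS
  obtain ⟨v, hv, hv0⟩ := exists_mem_orthogonal_ne_zero_of_topologicalClosure_ne_top hSc
  exact (hφ.eq_zero_or_eq_zero_of_inner_eq_zero
    (fun n hn => inner_eq_zero_of_mem_orthogonal_span_image hu hn)
    (fun n hn => inner_eq_zero_of_mem_orthogonal_span_image hv hn)).elim hu0 hv0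

end PhaseRetrieval

end

theorem phase_retrieval_implies_complement_property_general
    {𝕜 H I : Type*} [RCLike 𝕜] [NormedAddCommGroup H] [InnerProductSpace 𝕜 H]
    [CompleteSpace H]
    (φ : I → H)
    (hPR : ∀ f g : H, (∀ n, ‖(inner 𝕜 f (φ n) : 𝕜)‖ = ‖(inner 𝕜 g (φ n) : 𝕜)‖) →
      ∃ α : 𝕜, ‖α‖ = 1 ∧ f = α • g) :
    ∀ S : Set I,
      (Submodule.span 𝕜 (φ '' S)).topologicalClosure = ⊤ ∨
      (Submodule.span 𝕜 (φ '' Sᶜ)).topologicalClosure = ⊤ :=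
  PhaseRetrieval.complementProperty hPR

/-- Let `H` be a separable Hilbert space (over `ℝ` or `ℂ`) and let
`Φ = {φ n}_{n ∈ I}` be a frame for `H`. If `Φ` does phase retrieval, then `Φ` has the
complement property. -/
theorem phase_retrieval_implies_complement_property
    {𝕜 H I : Type*} [RCLike 𝕜] [NormedAddCommGroup H] [InnerProductSpace 𝕜 H]
    [CompleteSpace H] [TopologicalSpace.SeparableSpace H] [Countable I]
    (φ : I → H) (A B : ℝ) (hA : 0 < A) (hAB : A ≤ B)
    (hframe : ∀ f : H, ∃ s : ℝ,
      HasSum (fun n => ‖(inner 𝕜 f (φ n) : 𝕜)‖ ^ 2) s ∧ A * ‖f‖ ^ 2 ≤ s ∧ s ≤ B * ‖f‖ ^ 2)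
    (hPR : ∀ f g : H, (∀ n, ‖(inner 𝕜 f (φ n) : 𝕜)‖ = ‖(inner 𝕜 g (φ n) : 𝕜)‖) →
      ∃ α : 𝕜, ‖α‖ = 1 ∧ f = α • g) :
    ∀ S : Set I,
      (Submodule.span 𝕜 (φ '' S)).topologicalClosure = ⊤ ∨
      (Submodule.span 𝕜 (φ '' Sᶜ)).topologicalClosure = ⊤ :=
  phase_retrieval_implies_complement_property_general φ hPR
end

section
/- Let H be a separable Hilbert space over the real numbers and let Φ = {φ_n}_{n∈I} be a frame for H. If Φ has the complement property, then Φ does phase retrieval (i.e., |⟨f,φ_n⟩| = |⟨g,φ_n⟩| for all n ∈ I implies f = g or f = −g). -/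
/-!
Let `S` be the set of `n` with `⟪f - g, φ n⟫ = 0`. Off `S`, the equation
`|⟪f, φ n⟫| = |⟪g, φ n⟫|` forces `⟪f, φ n⟫ = -⟪g, φ n⟫`, i.e. `⟪f + g, φ n⟫ = 0`. So `f - g` is
orthogonal to `φ '' S` and `f + g` to `φ '' Sᶜ`; by the complement property one of the two spans
is dense, and a vector orthogonal to a dense subspace vanishes.
-/

open Submodule

theorem eq_zero_of_inner_eq_zero_of_dense_span {𝕜 E ι : Type*} [RCLike 𝕜] [NormedAddCommGroup E]
    [InnerProductSpace 𝕜 E] {v : ι → E} {T : Set ι}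
    (hT : (span 𝕜 (v '' T)).topologicalClosure = ⊤) {x : E} (hx : ∀ n ∈ T, inner 𝕜 x (v n) = 0) :
    x = 0 := by
  have hspan : span 𝕜 (v '' T) ≤ (𝕜 ∙ x)ᗮ := span_le.mpr <| Set.image_subset_iff.mpr fun n hn =>
    mem_orthogonal_singleton_iff_inner_left.mpr (inner_eq_zero_symm.mp (hx n hn))
  have hx' : x ∈ (span 𝕜 (v '' T))ᗮ :=
    (mem_orthogonal _ _).mpr fun u hu => mem_orthogonal_singleton_iff_inner_left.mp (hspan hu)
  rwa [← orthogonal_closure, hT, top_orthogonal_eq_bot, mem_bot] at hx'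

theorem inner_add_eq_zero_of_abs_inner_eq {E : Type*} [NormedAddCommGroup E]
    [InnerProductSpace ℝ E] {f g v : E} (habs : |inner ℝ f v| = |inner ℝ g v|)
    (hne : inner ℝ (f - g) v ≠ 0) : inner ℝ (f + g) v = 0 := by
  rw [inner_sub_left, sub_ne_zero] at hne
  rw [inner_add_left, ← eq_neg_iff_add_eq_zero]
  exact (abs_eq_abs.mp habs).resolve_left hne

theorem complement_property_implies_phase_retrieval_real_general
    {H I : Type*} [NormedAddCommGroup H] [InnerProductSpace ℝ H]
    (φ : I → H)
    (hCP : ∀ S : Set I,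
      (Submodule.span ℝ (φ '' S)).topologicalClosure = ⊤ ∨
      (Submodule.span ℝ (φ '' Sᶜ)).topologicalClosure = ⊤) :
    ∀ f g : H, (∀ n, ‖(inner ℝ f (φ n) : ℝ)‖ = ‖(inner ℝ g (φ n) : ℝ)‖) →
      f = g ∨ f = -g := by
  intro f g hfg
  rcases hCP {n | inner ℝ (f - g) (φ n) = 0} with hS | hSc
  · exact .inl <| sub_eq_zero.mp <| eq_zero_of_inner_eq_zero_of_dense_span hS fun n hn => hn
  · refine .inr <| eq_neg_of_add_eq_zero_left <| eq_zero_of_inner_eq_zero_of_dense_span hSc ?_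
    exact fun n hn => inner_add_eq_zero_of_abs_inner_eq (hfg n) hn

/-- Let `H` be a separable real Hilbert space and let `Φ = {φ n}_{n ∈ I}`
be a frame for `H`. If `Φ` has the complement property, then `Φ` does phase retrieval:
`|⟨f, φ n⟩| = |⟨g, φ n⟩|` for all `n ∈ I` implies `f = g` or `f = -g`. -/
theorem complement_property_implies_phase_retrieval_real
    {H I : Type*} [NormedAddCommGroup H] [InnerProductSpace ℝ H]
    [CompleteSpace H] [TopologicalSpace.SeparableSpace H] [Countable I]
    (φ : I → H) (A B : ℝ) (hA : 0 < A) (hAB : A ≤ B)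
    (hframe : ∀ f : H, ∃ s : ℝ,
      HasSum (fun n => ‖(inner ℝ f (φ n) : ℝ)‖ ^ 2) s ∧ A * ‖f‖ ^ 2 ≤ s ∧ s ≤ B * ‖f‖ ^ 2)
    (hCP : ∀ S : Set I,
      (Submodule.span ℝ (φ '' S)).topologicalClosure = ⊤ ∨
      (Submodule.span ℝ (φ '' Sᶜ)).topologicalClosure = ⊤) :
    ∀ f g : H, (∀ n, ‖(inner ℝ f (φ n) : ℝ)‖ = ‖(inner ℝ g (φ n) : ℝ)‖) →
      f = g ∨ f = -g :=
  complement_property_implies_phase_retrieval_real_general φ hCP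
end

section
/- Let Φ = {φ_n}_{n=1}^N be a finite family of vectors in ℂ^M that does phase retrieval for ℂ^M. Then there exists a constant C < ∞ such that for all f, g ∈ ℂ^M: inf_{|α|=1} ‖f − αg‖ ≤ C · (Σ_{n=1}^N (|⟨f,φ_n⟩| − |⟨g,φ_n⟩|)²)^{1/2}. -/
/-!
Lift a pair `(f, g)` to the Hermitian matrix `Q = f f* - g g*`. The quantities
`|⟨f, φₙ⟩|² - |⟨g, φₙ⟩|²` are linear in `Q`, and phase retrieval says that they all vanish only
when `Q = 0`. The matrices of this form make up a cone whose unit sphere is compact: a hyperbolic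
rotation of `(f, g)` keeps `Q` and makes `f ⊥ g`, after which `‖Q‖² = ‖f‖⁴ + ‖g‖⁴` bounds `f` and
`g`. Compactness yields `c ‖Q‖² ≤ ∑ₙ (|⟨f, φₙ⟩|² - |⟨g, φₙ⟩|²)²`, and the identity
`‖Q‖² = ‖f‖⁴ + ‖g‖⁴ - 2 |⟨f, g⟩|²` turns this into a bound on
`min_α ‖f - α g‖² = ‖f‖² + ‖g‖² - 2 |⟨f, g⟩|²`.
-/

open Complex Metric Set
open scoped InnerProductSpace ComplexConjugate

def DoesPhaseRetrieval {κ E : Type*} [NormedAddCommGroup E] [InnerProductSpace ℂ E]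
    (φ : κ → E) : Prop :=
  ∀ f g : E, (∀ n, ‖⟪f, φ n⟫_ℂ‖ = ‖⟪g, φ n⟫_ℂ‖) → ∃ α : ℂ, ‖α‖ = 1 ∧ f = α • g

lemma exists_norm_eq_one_eq_norm_mul (z : ℂ) : ∃ ν : ℂ, ‖ν‖ = 1 ∧ z = ‖z‖ * ν :=
  ⟨_, norm_exp_ofReal_mul_I _, (norm_mul_exp_arg_mul_I z).symm⟩

section InnerProductSpace

variable {E : Type*} [NormedAddCommGroup E] [InnerProductSpace ℂ E]

lemma inner_sub_smul_sub_smul (f g : E) (u : ℝ) (ν : ℂ) :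
    ⟪f - (u * conj ν) • g, g - (u * ν) • f⟫_ℂ
      = ⟪f, g⟫_ℂ - u * ν * (‖f‖ ^ 2 + ‖g‖ ^ 2) + u ^ 2 * ν ^ 2 * conj ⟪f, g⟫_ℂ := by
  simp only [inner_sub_left, inner_sub_right, inner_smul_left, inner_smul_right,
    inner_self_eq_norm_sq_to_K, ← inner_conj_symm g f, map_mul, conj_conj, conj_ofReal]
  simp only [RCLike.ofReal_eq_complex_ofReal]
  ring

/-- Up to the factor `√(1 - u²)`, the pair `(f - u ν̄ g, g - u ν f)` is a hyperbolic rotation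
of `(f, g)`, so it has the same `f f* - g g*` (see `outerDiff_sub_smul_sub_smul`). -/
lemma exists_inner_sub_smul_eq_zero (f g : E) (h : 2 * ‖⟪f, g⟫_ℂ‖ < ‖f‖ ^ 2 + ‖g‖ ^ 2) :
    ∃ u : ℝ, ∃ ν : ℂ, ‖ν‖ = 1 ∧ u ^ 2 < 1 ∧ ⟪f - (u * conj ν) • g, g - (u * ν) • f⟫_ℂ = 0 := by
  set r := ‖⟪f, g⟫_ℂ‖
  set p : ℝ → ℝ := fun u => r * u ^ 2 - (‖f‖ ^ 2 + ‖g‖ ^ 2) * u + r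
  have hroot : (0 : ℝ) ∈ p '' Icc 0 1 :=
    intermediate_value_Icc' zero_le_one (by fun_prop)
      ⟨by simp only [p]; linarith, by simp only [p]; nlinarith [norm_nonneg ⟪f, g⟫_ℂ]⟩
  obtain ⟨u, ⟨hu0, hu1⟩, hpu⟩ := hroot
  have hu1' : u ≠ 1 := by rintro rfl; simp only [p] at hpu; linarith
  obtain ⟨ν, hν, hz⟩ := exists_norm_eq_one_eq_norm_mul ⟪f, g⟫_ℂ
  refine ⟨u, ν, hν, by nlinarith [lt_of_le_of_ne hu1 hu1'], ?_⟩
  have hνν : ν * conj ν = 1 := by rw [mul_conj', hν]; norm_num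
  have hpu' : (r : ℂ) * u ^ 2 - (‖f‖ ^ 2 + ‖g‖ ^ 2) * u + r = 0 := by exact_mod_cast hpu
  rw [inner_sub_smul_sub_smul, hz]
  simp only [map_mul, conj_ofReal]
  linear_combination ν * hpu' + (u : ℂ) ^ 2 * r * ν * hνν

lemma iInf_norm_sub_smul_le_sqrt (f g : E) :
    ⨅ α : sphere (0 : ℂ) 1, ‖f - (α : ℂ) • g‖ ≤ √(‖f‖ ^ 2 + ‖g‖ ^ 2 - 2 * ‖⟪f, g⟫_ℂ‖) := by
  obtain ⟨ν, hν, hz⟩ := exists_norm_eq_one_eq_norm_mul ⟪f, g⟫_ℂ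
  have hα : conj ν ∈ sphere (0 : ℂ) 1 := by simpa using hν
  have hαz : conj ν * ⟪f, g⟫_ℂ = ‖⟪f, g⟫_ℂ‖ := by
    conv_lhs => rw [hz]
    rw [mul_left_comm, conj_mul', hν, ofReal_one, one_pow, mul_one]
  have hbdd : BddBelow (range fun α : sphere (0 : ℂ) 1 => ‖f - (α : ℂ) • g‖) :=
    ⟨0, by rintro _ ⟨_, rfl⟩; positivity⟩
  refine (ciInf_le hbdd ⟨conj ν, hα⟩).trans (Real.le_sqrt_of_sq_le (le_of_eq ?_))
  rw [@norm_sub_sq ℂ, inner_smul_right, hαz, norm_smul, mem_sphere_zero_iff_norm.1 hα]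
  simp only [RCLike.re_to_complex, ofReal_re]
  ring

lemma sum_sq_norm_inner_sq_sub_le {κ : Type*} [Fintype κ] (φ : κ → E) (f g : E) :
    ∑ n, (‖⟪f, φ n⟫_ℂ‖ ^ 2 - ‖⟪g, φ n⟫_ℂ‖ ^ 2) ^ 2
      ≤ 2 * (‖f‖ ^ 2 + ‖g‖ ^ 2) * (∑ n, ‖φ n‖ ^ 2) *
          ∑ n, (‖⟪f, φ n⟫_ℂ‖ - ‖⟪g, φ n⟫_ℂ‖) ^ 2 := by
  rw [Finset.mul_sum]
  refine Finset.sum_le_sum fun n _ => ?_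
  have hf := norm_inner_le_norm (𝕜 := ℂ) f (φ n)
  have hg := norm_inner_le_norm (𝕜 := ℂ) g (φ n)
  have hφ : ‖φ n‖ ^ 2 ≤ ∑ m, ‖φ m‖ ^ 2 :=
    Finset.single_le_sum (fun m _ => sq_nonneg ‖φ m‖) (Finset.mem_univ n)
  have hsum : (‖⟪f, φ n⟫_ℂ‖ + ‖⟪g, φ n⟫_ℂ‖) ^ 2 ≤ 2 * (‖f‖ ^ 2 + ‖g‖ ^ 2) * ∑ m, ‖φ m‖ ^ 2 := by
    nlinarith [sq_nonneg (‖⟪f, φ n⟫_ℂ‖ - ‖⟪g, φ n⟫_ℂ‖), norm_nonneg ⟪f, φ n⟫_ℂ,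
      norm_nonneg ⟪g, φ n⟫_ℂ, mul_le_mul hf hf (norm_nonneg _) (by positivity),
      mul_le_mul hg hg (norm_nonneg _) (by positivity)]
  calc (‖⟪f, φ n⟫_ℂ‖ ^ 2 - ‖⟪g, φ n⟫_ℂ‖ ^ 2) ^ 2
      = (‖⟪f, φ n⟫_ℂ‖ + ‖⟪g, φ n⟫_ℂ‖) ^ 2 * (‖⟪f, φ n⟫_ℂ‖ - ‖⟪g, φ n⟫_ℂ‖) ^ 2 := by ring
    _ ≤ _ := mul_le_mul_of_nonneg_right hsum (sq_nonneg _)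

end InnerProductSpace

theorem exists_pos_mul_norm_sq_le {V : Type*} [NormedAddCommGroup V] [NormedSpace ℝ V]
    {C : Set V} {G : V → ℝ} (hC : ∀ x ∈ C, ‖x‖⁻¹ • x ∈ C) (hK : IsCompact (sphere 0 1 ∩ C))
    (hG : Continuous G) (hG_smul : ∀ (t : ℝ) (x : V), G (t • x) = t ^ 2 * G x)
    (hG_pos : ∀ x ∈ sphere (0 : V) 1 ∩ C, 0 < G x) :
    ∃ c > 0, ∀ x ∈ C, c * ‖x‖ ^ 2 ≤ G x := by
  obtain ⟨c, hc, hcK⟩ : ∃ c > 0, ∀ y ∈ sphere (0 : V) 1 ∩ C, c ≤ G y := by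
    rcases (sphere (0 : V) 1 ∩ C).eq_empty_or_nonempty with hK₀ | hK₀
    · exact ⟨1, one_pos, by simp [hK₀]⟩
    · obtain ⟨y₀, hy₀, hmin⟩ := hK.exists_isMinOn hK₀ hG.continuousOn
      exact ⟨G y₀, hG_pos y₀ hy₀, fun y hy => hmin hy⟩
  refine ⟨c, hc, fun x hx => ?_⟩
  rcases eq_or_ne x 0 with rfl | hx₀
  · have hG₀ : G 0 = 0 := by simpa using hG_smul 0 0
    simp [hG₀]
  · have hnx : 0 < ‖x‖ := norm_pos_iff.2 hx₀
    have := hcK _ ⟨by simp [norm_smul, hnx.ne'], hC x hx⟩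
    rw [hG_smul, inv_pow, le_inv_mul_iff₀ (by positivity)] at this
    linarith

section Outer

variable {ι : Type*}

/-- The matrix `a b*`, stored as a vector of `ℂ^(ι × ι)` so that its Euclidean norm is the
Frobenius norm. -/
noncomputable def outerProd (a b : EuclideanSpace ℂ ι) : EuclideanSpace ℂ (ι × ι) :=
  WithLp.toLp 2 fun p => a p.1 * conj (b p.2)

noncomputable def outerDiff (f g : EuclideanSpace ℂ ι) : EuclideanSpace ℂ (ι × ι) :=
  outerProd f f - outerProd g g

@[simp]
lemma outerProd_apply (a b : EuclideanSpace ℂ ι) (p : ι × ι) :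
    outerProd a b p = a p.1 * conj (b p.2) := rfl

lemma continuous_outerProd :
    Continuous fun p : EuclideanSpace ℂ ι × EuclideanSpace ℂ ι => outerProd p.1 p.2 := by
  unfold outerProd; fun_prop

lemma outerProd_smul_smul (s t : ℝ) (a b : EuclideanSpace ℂ ι) :
    outerProd (s • a) (t • b) = (s * t) • outerProd a b := by
  ext p
  simp only [outerProd_apply, PiLp.smul_apply, real_smul, map_mul, conj_ofReal, ofReal_mul]
  ring

lemma outerProd_smul_self {α : ℂ} (hα : ‖α‖ = 1) (a : EuclideanSpace ℂ ι) :
    outerProd (α • a) (α • a) = outerProd a a := by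
  have hαα : α * conj α = 1 := by rw [mul_conj', hα]; norm_num
  ext p
  simp only [outerProd_apply, PiLp.smul_apply, smul_eq_mul, map_mul]
  linear_combination a p.1 * conj (a p.2) * hαα

lemma outerDiff_smul_left {α : ℂ} (hα : ‖α‖ = 1) (g : EuclideanSpace ℂ ι) :
    outerDiff (α • g) g = 0 := by
  rw [outerDiff, outerProd_smul_self hα, sub_self]

lemma outerDiff_smul_smul (s : ℝ) (f g : EuclideanSpace ℂ ι) :
    outerDiff (s • f) (s • g) = (s * s) • outerDiff f g := by
  rw [outerDiff, outerDiff, outerProd_smul_smul, outerProd_smul_smul, ← smul_sub]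

lemma outerDiff_sub_smul_sub_smul (f g : EuclideanSpace ℂ ι) (u : ℝ) {ν : ℂ} (hν : ‖ν‖ = 1) :
    outerDiff (f - (u * conj ν) • g) (g - (u * ν) • f) = (1 - u ^ 2) • outerDiff f g := by
  have hνν : ν * conj ν = 1 := by rw [mul_conj', hν]; norm_num
  ext p
  simp only [outerDiff, outerProd_apply, PiLp.sub_apply, PiLp.smul_apply, smul_eq_mul, real_smul,
    map_sub, map_mul, conj_conj, conj_ofReal]
  push_cast
  linear_combination (-(u : ℂ) ^ 2 * (f p.1 * conj (f p.2) - g p.1 * conj (g p.2))) * hνν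

variable [Fintype ι]

lemma continuous_outerDiff : Continuous (Function.uncurry (outerDiff (ι := ι))) :=
  (continuous_outerProd.comp (continuous_fst.prodMk continuous_fst)).sub
    (continuous_outerProd.comp (continuous_snd.prodMk continuous_snd))

lemma inner_outerProd (a b c d : EuclideanSpace ℂ ι) :
    ⟪outerProd a b, outerProd c d⟫_ℂ = ⟪a, c⟫_ℂ * ⟪d, b⟫_ℂ := by
  simp only [PiLp.inner_apply, outerProd_apply, RCLike.inner_apply, Fintype.sum_prod_type,
    Fintype.sum_mul_sum, map_mul, conj_conj]
  refine Finset.sum_congr rfl fun i _ => Finset.sum_congr rfl fun j _ => ?_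
  ring

lemma norm_outerDiff_sq (f g : EuclideanSpace ℂ ι) :
    ‖outerDiff f g‖ ^ 2 = ‖f‖ ^ 4 + ‖g‖ ^ 4 - 2 * ‖⟪f, g⟫_ℂ‖ ^ 2 := by
  have hre : ∀ a b : EuclideanSpace ℂ ι, re ⟪outerProd a a, outerProd b b⟫_ℂ = ‖⟪a, b⟫_ℂ‖ ^ 2 := by
    intro a b
    rw [inner_outerProd, ← inner_conj_symm b a, mul_conj']
    norm_cast
  have hself : ∀ a : EuclideanSpace ℂ ι, ‖⟪a, a⟫_ℂ‖ = ‖a‖ ^ 2 := fun a => by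
    rw [← inner_self_re_eq_norm, inner_self_eq_norm_sq]
  rw [outerDiff, @norm_sub_sq ℂ, @norm_sq_eq_re_inner ℂ,
    @norm_sq_eq_re_inner ℂ _ _ _ _ (outerProd g g)]
  simp only [RCLike.re_to_complex, hre, hself]
  ring

lemma re_inner_outerProd_outerDiff (f g x : EuclideanSpace ℂ ι) :
    re ⟪outerProd x x, outerDiff f g⟫_ℂ = ‖⟪f, x⟫_ℂ‖ ^ 2 - ‖⟪g, x⟫_ℂ‖ ^ 2 := by
  rw [outerDiff, inner_sub_right, inner_outerProd, inner_outerProd, ← inner_conj_symm x f,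
    ← inner_conj_symm x g, conj_mul', conj_mul']
  norm_cast

lemma two_mul_norm_inner_lt_of_outerDiff_ne_zero {f g : EuclideanSpace ℂ ι}
    (h : outerDiff f g ≠ 0) : 2 * ‖⟪f, g⟫_ℂ‖ < ‖f‖ ^ 2 + ‖g‖ ^ 2 := by
  have hpos := pow_pos (norm_pos_iff.2 h) 2
  rw [norm_outerDiff_sq] at hpos
  have hcs := norm_inner_le_norm (𝕜 := ℂ) f g
  by_contra! hle
  nlinarith [norm_nonneg f, norm_nonneg g, norm_nonneg ⟪f, g⟫_ℂ, sq_nonneg (‖f‖ - ‖g‖),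
    mul_nonneg (norm_nonneg f) (norm_nonneg g)]

lemma exists_inner_eq_zero_outerDiff_eq (f g : EuclideanSpace ℂ ι) (h : outerDiff f g ≠ 0) :
    ∃ f' g' : EuclideanSpace ℂ ι, ⟪f', g'⟫_ℂ = 0 ∧ outerDiff f' g' = outerDiff f g := by
  obtain ⟨u, ν, hν, hu, horth⟩ :=
    exists_inner_sub_smul_eq_zero f g (two_mul_norm_inner_lt_of_outerDiff_ne_zero h)
  set s := (√(1 - u ^ 2))⁻¹
  refine ⟨s • (f - (u * conj ν) • g), s • (g - (u * ν) • f), ?_, ?_⟩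
  · rw [← coe_smul, ← coe_smul, inner_smul_left, inner_smul_right, horth, mul_zero, mul_zero]
  · have hs : s * s * (1 - u ^ 2) = 1 := by
      rw [← mul_inv, Real.mul_self_sqrt (by linarith), inv_mul_cancel₀ (by linarith)]
    rw [outerDiff_smul_smul, outerDiff_sub_smul_sub_smul f g u hν, smul_smul, hs, one_smul]

lemma isCompact_sphere_inter_range_outerDiff :
    IsCompact (sphere 0 1 ∩ range (Function.uncurry (outerDiff (ι := ι)))) := by
  suffices sphere 0 1 ∩ range (Function.uncurry (outerDiff (ι := ι)))
      = sphere 0 1 ∩ Function.uncurry (outerDiff (ι := ι)) '' (closedBall 0 1 ×ˢ closedBall 0 1) by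
    have hK : IsCompact
        (Function.uncurry (outerDiff (ι := ι)) '' (closedBall 0 1 ×ˢ closedBall 0 1)) :=
      ((isCompact_closedBall 0 1).prod (isCompact_closedBall 0 1)).image continuous_outerDiff
    rw [this]
    exact hK.inter_left isClosed_sphere
  refine subset_antisymm ?_ (inter_subset_inter_right _ (image_subset_range _ _))
  rintro _ ⟨hQ, ⟨f, g⟩, rfl⟩
  have hQ₁ : ‖outerDiff f g‖ = 1 := mem_sphere_zero_iff_norm.1 hQ
  obtain ⟨f', g', horth, heq⟩ :=
    exists_inner_eq_zero_outerDiff_eq f g fun h => by simp [h] at hQ₁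
  have hnorm := norm_outerDiff_sq f' g'
  rw [heq, horth, norm_zero, hQ₁] at hnorm
  refine ⟨hQ, (f', g'), ⟨mem_closedBall_zero_iff.2 ?_, mem_closedBall_zero_iff.2 ?_⟩, heq⟩
  · exact (pow_le_one_iff_of_nonneg (norm_nonneg f') four_ne_zero).1
      (by nlinarith [pow_nonneg (norm_nonneg g') 4])
  · exact (pow_le_one_iff_of_nonneg (norm_nonneg g') four_ne_zero).1
      (by nlinarith [pow_nonneg (norm_nonneg f') 4])

lemma mul_sub_le_two_mul_norm_outerDiff_sq (f g : EuclideanSpace ℂ ι) :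
    (‖f‖ ^ 2 + ‖g‖ ^ 2) * (‖f‖ ^ 2 + ‖g‖ ^ 2 - 2 * ‖⟪f, g⟫_ℂ‖) ≤ 2 * ‖outerDiff f g‖ ^ 2 := by
  rw [norm_outerDiff_sq]
  nlinarith [norm_inner_le_norm (𝕜 := ℂ) f g, norm_nonneg ⟪f, g⟫_ℂ, sq_nonneg (‖f‖ - ‖g‖),
    sq_nonneg (‖f‖ ^ 2 - ‖g‖ ^ 2)]

theorem DoesPhaseRetrieval.exists_pos_mul_norm_outerDiff_sq_le {κ : Type*} [Fintype κ]
    {φ : κ → EuclideanSpace ℂ ι} (hφ : DoesPhaseRetrieval φ) :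
    ∃ c > 0, ∀ f g, c * ‖outerDiff f g‖ ^ 2 ≤ ∑ n, (‖⟪f, φ n⟫_ℂ‖ ^ 2 - ‖⟪g, φ n⟫_ℂ‖ ^ 2) ^ 2 := by
  set G : EuclideanSpace ℂ (ι × ι) → ℝ := fun Q => ∑ n, (re ⟪outerProd (φ n) (φ n), Q⟫_ℂ) ^ 2
  have hG : ∀ f g, G (outerDiff f g) = ∑ n, (‖⟪f, φ n⟫_ℂ‖ ^ 2 - ‖⟪g, φ n⟫_ℂ‖ ^ 2) ^ 2 := by
    simp [G, re_inner_outerProd_outerDiff]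
  have hcone : ∀ Q ∈ range (Function.uncurry (outerDiff (ι := ι))), ‖Q‖⁻¹ • Q ∈
      range (Function.uncurry outerDiff) := by
    rintro _ ⟨⟨f, g⟩, rfl⟩
    refine ⟨(√‖outerDiff f g‖⁻¹ • f, √‖outerDiff f g‖⁻¹ • g), ?_⟩
    rw [Function.uncurry_apply_pair, outerDiff_smul_smul, Real.mul_self_sqrt (by positivity)]
    rfl
  have hG_smul : ∀ (t : ℝ) Q, G (t • Q) = t ^ 2 * G Q := by
    intro t Q
    simp only [G, ← coe_smul, inner_smul_right, re_ofReal_mul, mul_pow, Finset.mul_sum]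
  have hG_pos : ∀ Q ∈ sphere 0 1 ∩ range (Function.uncurry outerDiff), 0 < G Q := by
    rintro _ ⟨hQ, ⟨f, g⟩, rfl⟩
    rw [Function.uncurry_apply_pair, hG]
    refine (Finset.sum_nonneg fun _ _ => sq_nonneg _).lt_of_ne fun h₀ => ?_
    have hnorm : ∀ n, ‖⟪f, φ n⟫_ℂ‖ = ‖⟪g, φ n⟫_ℂ‖ := fun n => by
      have := (Finset.sum_eq_zero_iff_of_nonneg fun _ _ => sq_nonneg _).1 h₀.symm n
        (Finset.mem_univ n)
      rwa [sq_eq_zero_iff, sub_eq_zero, pow_left_inj₀ (norm_nonneg _) (norm_nonneg _) two_ne_zero]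
        at this
    obtain ⟨α, hα, rfl⟩ := hφ f g hnorm
    simp [outerDiff_smul_left hα] at hQ
  obtain ⟨c, hc, hcG⟩ := exists_pos_mul_norm_sq_le hcone isCompact_sphere_inter_range_outerDiff
    (by fun_prop) hG_smul hG_pos
  exact ⟨c, hc, fun f g => hG f g ▸ hcG _ ⟨(f, g), rfl⟩⟩

theorem DoesPhaseRetrieval.exists_sq_le_mul_sum_sq {κ : Type*} [Fintype κ]
    {φ : κ → EuclideanSpace ℂ ι} (hφ : DoesPhaseRetrieval φ) :
    ∃ C ≥ 0, ∀ f g, ‖f‖ ^ 2 + ‖g‖ ^ 2 - 2 * ‖⟪f, g⟫_ℂ‖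
      ≤ C * ∑ n, (‖⟪f, φ n⟫_ℂ‖ - ‖⟪g, φ n⟫_ℂ‖) ^ 2 := by
  obtain ⟨c, hc, hkey⟩ := hφ.exists_pos_mul_norm_outerDiff_sq_le
  refine ⟨4 * (∑ n, ‖φ n‖ ^ 2) / c, by positivity, fun f g => ?_⟩
  have hlift := mul_sub_le_two_mul_norm_outerDiff_sq f g
  have hfrob := (hkey f g).trans (sum_sq_norm_inner_sq_sub_le φ f g)
  have hrhs : 0 ≤ 4 * (∑ n, ‖φ n‖ ^ 2) * ∑ n, (‖⟪f, φ n⟫_ℂ‖ - ‖⟪g, φ n⟫_ℂ‖) ^ 2 := by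
    positivity
  rw [div_mul_eq_mul_div, le_div_iff₀ hc]
  rcases (by positivity : (0 : ℝ) ≤ ‖f‖ ^ 2 + ‖g‖ ^ 2).eq_or_lt with hs | hs
  · nlinarith [norm_nonneg ⟪f, g⟫_ℂ]
  · refine le_of_mul_le_mul_left ?_ hs
    nlinarith [mul_le_mul_of_nonneg_left hlift hc.le]

end Outer

/-- Let `Φ = {φ n}_{n=1}^N` be a finite family of vectors in `ℂ^M` doing
phase retrieval for `ℂ^M`. Then there is a constant `C < ∞` such that for all `f, g ∈ ℂ^M`,
`inf_{|α|=1} ‖f - α g‖ ≤ C · (∑ n, (|⟨f, φ n⟩| - |⟨g, φ n⟩|)²)^{1/2}`. -/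
theorem finite_dim_phase_retrieval_stable
    {M N : ℕ} (φ : Fin N → EuclideanSpace ℂ (Fin M))
    (hPR : ∀ f g : EuclideanSpace ℂ (Fin M),
      (∀ n, ‖(inner ℂ f (φ n) : ℂ)‖ = ‖(inner ℂ g (φ n) : ℂ)‖) →
      ∃ α : ℂ, ‖α‖ = 1 ∧ f = α • g) :
    ∃ C : ℝ, ∀ f g : EuclideanSpace ℂ (Fin M),
      (⨅ α : Metric.sphere (0 : ℂ) 1, ‖f - (α : ℂ) • g‖) ≤
        C * Real.sqrt (∑ n, (‖(inner ℂ f (φ n) : ℂ)‖ - ‖(inner ℂ g (φ n) : ℂ)‖) ^ 2) := by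
  obtain ⟨C, hC, hdist⟩ := DoesPhaseRetrieval.exists_sq_le_mul_sum_sq hPR
  refine ⟨√C, fun f g => ?_⟩
  calc _ ≤ √(‖f‖ ^ 2 + ‖g‖ ^ 2 - 2 * ‖⟪f, g⟫_ℂ‖) := iInf_norm_sub_smul_le_sqrt f g
    _ ≤ _ := Real.sqrt_le_sqrt (hdist f g)
    _ = _ := Real.sqrt_mul hC _
end

section
/- Let H be an infinite-dimensional separable Hilbert space and let Φ = {φ_n}_{n∈ℕ} be a frame for H with frame bounds 0 < A ≤ B < ∞, and suppose ‖φ_n‖ ≥ c > 0 for every n ∈ ℕ. Then for every δ > 0 there exist f, g ∈ H such that inf_{|α|=1} ‖f − αg‖ ≥ 1 but (Σ_{n∈ℕ} (|⟨f,φ_n⟩| − |⟨g,φ_n⟩|)²)^{1/2} < δ. In particular, phase retrieval in an infinite-dimensional Hilbert space is never uniformly stable. -/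
/-!
Take an orthonormal sequence `(e k)` and put `f = e 0 + e k`, `g = e 0 - e k`. For unimodular `α`,
`f - α g = (1 - α) e 0 + (1 + α) e k` has norm `2` by Pythagoras and the parallelogram law.
On the other hand `(|a + b| - |a - b|)² ≤ 4 min(|a|², |b|²)` for `a = ⟨e 0, φ n⟩`, `b = ⟨e k, φ n⟩`:
the bound `4 |a|²` is summable by the frame inequality, and `4 |b|² → 0` as `k → ∞` by Bessel's
inequality, so by dominated convergence the measurement distance tends to `0`.
-/

open Filter Topology

theorem abs_norm_add_sub_norm_sub_le {G : Type*} [SeminormedAddCommGroup G] (a b : G) :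
    |‖a + b‖ - ‖a - b‖| ≤ 2 * ‖b‖ := by
  calc |‖a + b‖ - ‖a - b‖| ≤ ‖(a + b) - (a - b)‖ := abs_norm_sub_norm_le _ _
    _ = ‖b + b‖ := by rw [add_sub_sub_cancel]
    _ ≤ 2 * ‖b‖ := (norm_add_le b b).trans (two_mul _).symm.le

theorem sq_norm_add_sub_norm_sub_le {G : Type*} [SeminormedAddCommGroup G] (a b : G) :
    (‖a + b‖ - ‖a - b‖) ^ 2 ≤ 4 * ‖b‖ ^ 2 := by
  rw [← sq_abs]
  nlinarith [abs_norm_add_sub_norm_sub_le a b, abs_nonneg (‖a + b‖ - ‖a - b‖)]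

section

variable {𝕜 E : Type*} [RCLike 𝕜] [NormedAddCommGroup E] [InnerProductSpace 𝕜 E]

theorem exists_orthonormal_nat_of_not_finiteDimensional (h : ¬ FiniteDimensional 𝕜 E) :
    ∃ e : ℕ → E, Orthonormal 𝕜 e := by
  obtain ⟨w, -, hw, hmax⟩ := exists_maximal_orthonormal (orthonormal_empty 𝕜 E)
  have hw_inf : w.Infinite := by
    intro hw_fin
    have : FiniteDimensional 𝕜 (Submodule.span 𝕜 w) := FiniteDimensional.span_of_finite 𝕜 hw_fin
    have hspan : Submodule.span 𝕜 w = ⊤ := Submodule.orthogonal_eq_bot_iff.1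
      ((maximal_orthonormal_iff_orthogonalComplement_eq_bot hw).1 hmax)
    exact h (Module.finite_def.2 (hspan ▸ Submodule.fg_span hw_fin))
  exact ⟨_, hw.comp _ hw_inf.natEmbedding.injective⟩

theorem sq_norm_add_sub_smul_sub_of_orthonormal {x y : E} (hx : ‖x‖ = 1) (hy : ‖y‖ = 1)
    (hxy : inner 𝕜 x y = 0) (α : 𝕜) :
    ‖(x + y) - α • (x - y)‖ ^ 2 = 2 * (1 + ‖α‖ ^ 2) := by
  have hdecomp : (x + y) - α • (x - y) = (1 - α) • x + (1 + α) • y := by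
    rw [smul_sub, sub_smul, add_smul, one_smul, one_smul]; abel
  have horth : inner 𝕜 ((1 - α) • x) ((1 + α) • y) = 0 := by
    rw [inner_smul_left, inner_smul_right, hxy, mul_zero, mul_zero]
  rw [hdecomp, sq, norm_add_sq_eq_norm_sq_add_norm_sq_of_inner_eq_zero _ _ horth,
    norm_smul, norm_smul, hx, hy]
  have := parallelogram_law_with_norm 𝕜 (1 : 𝕜) α
  rw [norm_one] at this
  nlinarith [this]

theorem Orthonormal.tendsto_tsum_sq_norm_inner_add_sub_norm_inner_sub {e : ℕ → E}
    (he : Orthonormal 𝕜 e) (u : E) (φ : ℕ → E)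
    (hu : Summable fun n => ‖inner 𝕜 u (φ n)‖ ^ 2) :
    Tendsto (fun k => ∑' n, (‖inner 𝕜 (u + e k) (φ n)‖ - ‖inner 𝕜 (u - e k) (φ n)‖) ^ 2)
      atTop (𝓝 0) := by
  simp only [inner_add_left, inner_sub_left]
  rw [← tsum_zero]
  refine tendsto_tsum_of_dominated_convergence (hu.mul_left 4) (fun n => ?_) ?_
  · refine squeeze_zero (fun _ => sq_nonneg _) (fun k => sq_norm_add_sub_norm_sub_le _ _) ?_
    simpa using (he.inner_products_summable (x := φ n)).tendsto_atTop_zero.const_mul 4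
  · refine .of_forall fun k n => ?_
    rw [Real.norm_of_nonneg (sq_nonneg _), norm_sub_rev, add_comm]
    exact sq_norm_add_sub_norm_sub_le _ _

end

theorem phase_retrieval_never_uniformly_stable_general
    {𝕜 H : Type*} [RCLike 𝕜] [NormedAddCommGroup H] [InnerProductSpace 𝕜 H]
    (hinf : ¬ FiniteDimensional 𝕜 H)
    (φ : ℕ → H) (A B : ℝ)
    (hframe : ∀ f : H, ∃ s : ℝ,
      HasSum (fun n => ‖(inner 𝕜 f (φ n) : 𝕜)‖ ^ 2) s ∧ A * ‖f‖ ^ 2 ≤ s ∧ s ≤ B * ‖f‖ ^ 2) :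
    ∀ δ > (0 : ℝ), ∃ f g : H,
      (∀ α : 𝕜, ‖α‖ = 1 → 1 ≤ ‖f - α • g‖) ∧
      Real.sqrt (∑' n, (‖(inner 𝕜 f (φ n) : 𝕜)‖ - ‖(inner 𝕜 g (φ n) : 𝕜)‖) ^ 2) < δ := by
  intro δ hδ
  obtain ⟨e, he⟩ := exists_orthonormal_nat_of_not_finiteDimensional hinf
  obtain ⟨s, hs, -⟩ := hframe (e 0)
  have hsmall := (he.tendsto_tsum_sq_norm_inner_add_sub_norm_inner_sub (e 0) φ hs.summable).sqrt
  rw [Real.sqrt_zero] at hsmall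
  obtain ⟨k, hk, hk0⟩ :=
    ((hsmall.eventually (gt_mem_nhds hδ)).and (eventually_ne_atTop 0)).exists
  refine ⟨e 0 + e k, e 0 - e k, fun α hα => ?_, hk⟩
  have hsq := sq_norm_add_sub_smul_sub_of_orthonormal (he.1 0) (he.1 k) (he.2 hk0.symm) α
  rw [hα] at hsq
  nlinarith [norm_nonneg (e 0 + e k - α • (e 0 - e k))]

/-- **Main theorem.** Let `H` be an infinite-dimensional separable Hilbert
space and `Φ = {φ n}` a frame with bounds `0 < A ≤ B < ∞` and `‖φ n‖ ≥ c > 0` for all `n`.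
Then for every `δ > 0` there are `f, g ∈ H` with `inf_{|α|=1} ‖f - α g‖ ≥ 1` but
`‖A_Φ(f) - A_Φ(g)‖ < δ`: phase retrieval is never uniformly stable in infinite dimensions. -/
theorem phase_retrieval_never_uniformly_stable
    {𝕜 H : Type*} [RCLike 𝕜] [NormedAddCommGroup H] [InnerProductSpace 𝕜 H]
    [CompleteSpace H] [TopologicalSpace.SeparableSpace H]
    (hinf : ¬ FiniteDimensional 𝕜 H)
    (φ : ℕ → H) (A B c : ℝ) (hA : 0 < A) (hAB : A ≤ B) (hc : 0 < c)
    (hnorm : ∀ n, c ≤ ‖φ n‖)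
    (hframe : ∀ f : H, ∃ s : ℝ,
      HasSum (fun n => ‖(inner 𝕜 f (φ n) : 𝕜)‖ ^ 2) s ∧ A * ‖f‖ ^ 2 ≤ s ∧ s ≤ B * ‖f‖ ^ 2) :
    ∀ δ > (0 : ℝ), ∃ f g : H,
      (∀ α : 𝕜, ‖α‖ = 1 → 1 ≤ ‖f - α • g‖) ∧
      Real.sqrt (∑' n, (‖(inner 𝕜 f (φ n) : 𝕜)‖ - ‖(inner 𝕜 g (φ n) : 𝕜)‖) ^ 2) < δ :=
  phase_retrieval_never_uniformly_stable_general hinf φ A B hframe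
end

section
/- Let H be an infinite-dimensional separable Hilbert space. Then no frame Φ = {φ_n}_{n∈ℕ} for H has the σ-strong complement property, for any σ > 0. That is, for every frame Φ for H and every σ > 0 there exists a subset S ⊆ ℕ such that neither {φ_n}_{n∈S} nor {φ_n}_{n∉S} is a frame for H with lower frame bound at least σ. -/
/-!
Fix any `f₀ ≠ 0`. Its coefficient tails `∑_{n ∉ T} |⟨f₀, φ n⟩|²` tend to `0` along finite sets `T`,
so some finite `T` leaves less than `σ ‖f₀‖²` outside it, and `f₀` breaks the bound for `Tᶜ`.
On the other hand `{φ n}_{n ∈ T}` spans a finite-dimensional, hence proper, subspace of `H`, and a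
nonzero vector orthogonal to it breaks the bound for `T`.
-/

open Filter

section LowerFrameBound

variable {𝕜 H ι : Type*} [RCLike 𝕜] [NormedAddCommGroup H] [InnerProductSpace 𝕜 H]

variable (𝕜) in
def HasLowerFrameBound (φ : ι → H) (S : Set ι) (σ : ℝ) : Prop :=
  ∀ f : H, σ * ‖f‖ ^ 2 ≤ ∑' n : S, ‖(inner 𝕜 f (φ n) : 𝕜)‖ ^ 2

variable (𝕜) in
theorem exists_ne_zero_forall_inner_eq_zero_of_finite (hinf : ¬ FiniteDimensional 𝕜 H)
    {s : Set H} (hs : s.Finite) : ∃ g : H, g ≠ 0 ∧ ∀ v ∈ s, (inner 𝕜 v g : 𝕜) = 0 := by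
  set K := Submodule.span 𝕜 s
  have : FiniteDimensional 𝕜 K := FiniteDimensional.span_of_finite 𝕜 hs
  have hK : K ≠ ⊤ := fun h => by
    have : FiniteDimensional 𝕜 (⊤ : Submodule 𝕜 H) := h ▸ this
    exact hinf Submodule.topEquiv.finiteDimensional
  obtain ⟨g, hgK, hg⟩ := Submodule.exists_mem_ne_zero_of_ne_bot
    (mt Submodule.orthogonal_eq_bot_iff.mp hK)
  exact ⟨g, hg, fun v hv => hgK v (Submodule.subset_span hv)⟩

theorem not_hasLowerFrameBound_of_inner_eq_zero {φ : ι → H} {S : Set ι} {σ : ℝ} (hσ : 0 < σ)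
    {g : H} (hg : g ≠ 0) (horth : ∀ n ∈ S, (inner 𝕜 g (φ n) : 𝕜) = 0) :
    ¬ HasLowerFrameBound 𝕜 φ S σ := by
  intro h
  have hsum : ∑' n : S, ‖(inner 𝕜 g (φ n) : 𝕜)‖ ^ 2 = 0 := by
    simp [horth _ (Subtype.prop _)]
  have := h g
  rw [hsum] at this
  exact this.not_gt (by positivity)

theorem not_hasLowerFrameBound_of_finite (hinf : ¬ FiniteDimensional 𝕜 H) (φ : ι → H)
    {S : Set ι} (hS : S.Finite) {σ : ℝ} (hσ : 0 < σ) : ¬ HasLowerFrameBound 𝕜 φ S σ := by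
  obtain ⟨g, hg, horth⟩ := exists_ne_zero_forall_inner_eq_zero_of_finite 𝕜 hinf (hS.image φ)
  refine not_hasLowerFrameBound_of_inner_eq_zero hσ hg fun n hn => ?_
  rw [← inner_conj_symm, horth _ (Set.mem_image_of_mem φ hn), map_zero]

end LowerFrameBound

theorem no_strong_complement_property_infinite_dim_general
    {𝕜 H : Type*} [RCLike 𝕜] [NormedAddCommGroup H] [InnerProductSpace 𝕜 H]
    (hinf : ¬ FiniteDimensional 𝕜 H)
    (φ : ℕ → H)
    (σ : ℝ) (hσ : 0 < σ) :
    ∃ S : Set ℕ,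
      ¬ (∀ f : H, σ * ‖f‖ ^ 2 ≤ ∑' n : S, ‖(inner 𝕜 f (φ (n : ℕ)) : 𝕜)‖ ^ 2) ∧
      ¬ (∀ f : H, σ * ‖f‖ ^ 2 ≤ ∑' n : ↥Sᶜ, ‖(inner 𝕜 f (φ (n : ℕ)) : 𝕜)‖ ^ 2) := by
  have : Nontrivial H := not_subsingleton_iff_nontrivial.mp fun _ => hinf inferInstance
  obtain ⟨f₀, hf₀⟩ := exists_ne (0 : H)
  -- no summability is needed here, since a non-summable `tsum` is `0`
  obtain ⟨T, hT⟩ : ∃ T : Finset ℕ,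
      ∑' n : {n // n ∉ T}, ‖(inner 𝕜 f₀ (φ n) : 𝕜)‖ ^ 2 < σ * ‖f₀‖ ^ 2 :=
    ((tendsto_order.1 (tendsto_tsum_compl_atTop_zero
      fun n => ‖(inner 𝕜 f₀ (φ n) : 𝕜)‖ ^ 2)).2 _ (by positivity)).exists
  exact ⟨T, not_hasLowerFrameBound_of_finite hinf φ T.finite_toSet hσ,
    fun h => (h f₀).not_gt hT⟩

/-- No frame for an infinite-dimensional separable Hilbert space has the
`σ`-strong complement property, for any `σ > 0`: there is always a subset `S ⊆ ℕ` such that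
neither `{φ n}_{n ∈ S}` nor `{φ n}_{n ∉ S}` has lower frame bound at least `σ`. -/
theorem no_strong_complement_property_infinite_dim
    {𝕜 H : Type*} [RCLike 𝕜] [NormedAddCommGroup H] [InnerProductSpace 𝕜 H]
    [CompleteSpace H] [TopologicalSpace.SeparableSpace H]
    (hinf : ¬ FiniteDimensional 𝕜 H)
    (φ : ℕ → H) (A B : ℝ) (hA : 0 < A) (hAB : A ≤ B)
    (hframe : ∀ f : H, ∃ s : ℝ,
      HasSum (fun n => ‖(inner 𝕜 f (φ n) : 𝕜)‖ ^ 2) s ∧ A * ‖f‖ ^ 2 ≤ s ∧ s ≤ B * ‖f‖ ^ 2)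
    (σ : ℝ) (hσ : 0 < σ) :
    ∃ S : Set ℕ,
      ¬ (∀ f : H, σ * ‖f‖ ^ 2 ≤ ∑' n : S, ‖(inner 𝕜 f (φ (n : ℕ)) : 𝕜)‖ ^ 2) ∧
      ¬ (∀ f : H, σ * ‖f‖ ^ 2 ≤ ∑' n : ↥Sᶜ, ‖(inner 𝕜 f (φ (n : ℕ)) : 𝕜)‖ ^ 2) :=
  no_strong_complement_property_infinite_dim_general hinf φ σ hσ
end

section
/- Let H be an infinite-dimensional separable Hilbert space and let Φ = {φ_n}_{n∈ℕ} be a frame for H with frame bounds 0 < A ≤ B < ∞. For each m ∈ ℕ let V_m be a finite-dimensional subspace of H with dim(V_{m+1}) > dim(V_m), and suppose there is an increasing function G: ℕ → (0,∞) with G(m) → ∞ such that for every m and every f, g ∈ V_m: inf_{|α|=1} ‖f − αg‖ ≤ G(m) ‖A_Φ(f) − A_Φ(g)‖. Fix γ > 1 and R > 0, and let B_γ(R) = {f ∈ H : ‖f − P_m f‖ ≤ G(m+1)^{−γ} R ‖f‖ for every m ∈ ℕ}, where P_m is the orthogonal projection onto V_m. Then there is a constant C, depending only on B, R, γ and G(1),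 such that for every f, g ∈ B_γ(R): inf_{|α|=1} ‖f − αg‖ ≤ C (‖f‖ + ‖g‖)^{1/γ} · ‖A_Φ(f) − A_Φ(g)‖^{(γ−1)/γ}. -/
/-!
Project `f` and `g` onto `V m`, apply the stability estimate there, and pay for the projection
errors, which are at most `G (m+1)^(-γ) R (‖f‖ + ‖g‖)`, through the Lipschitz bound `√B` of `A_Φ`.
This gives, with `ε = ‖A_Φ f - A_Φ g‖` and `N = ‖f‖ + ‖g‖`,
`inf_α ‖f - α g‖ ≤ G m ε + (√B G m + 1) G (m+1)^(-γ) R N` for every `m`.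
Choosing `m` with `G m ≤ t < G (m+1)` at the balancing scale `t = (N / ε)^(1/γ)` turns both terms
into multiples of `t ε = N^(1/γ) ε^((γ-1)/γ)`; when `t < G 1` the trivial bound `N` suffices.
-/

open Filter Topology

section PhaseDist

variable (𝕜 : Type*) {E : Type*} [NormedField 𝕜] [SeminormedAddCommGroup E] [NormedSpace 𝕜 E]

noncomputable def phaseDist (f g : E) : ℝ :=
  ⨅ α : Metric.sphere (0 : 𝕜) 1, ‖f - (α : 𝕜) • g‖

theorem bddBelow_range_norm_sub_smul (f g : E) :
    BddBelow (Set.range fun α : Metric.sphere (0 : 𝕜) 1 => ‖f - (α : 𝕜) • g‖) :=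
  ⟨0, by rintro _ ⟨α, rfl⟩; positivity⟩

theorem phaseDist_le_norm_add (f g : E) : phaseDist 𝕜 f g ≤ ‖f‖ + ‖g‖ :=
  calc phaseDist 𝕜 f g ≤ ‖f - (1 : 𝕜) • g‖ :=
        ciInf_le (bddBelow_range_norm_sub_smul 𝕜 f g) ⟨1, by simp⟩
    _ ≤ ‖f‖ + ‖g‖ := by simpa only [one_smul] using norm_sub_le f g

theorem phaseDist_le_add (f g f' g' : E) :
    phaseDist 𝕜 f g ≤ phaseDist 𝕜 f' g' + (‖f - f'‖ + ‖g - g'‖) := by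
  rw [phaseDist, phaseDist, ciInf_add (bddBelow_range_norm_sub_smul 𝕜 f' g')]
  refine ciInf_mono (bddBelow_range_norm_sub_smul 𝕜 f g) fun α => ?_
  have hα : ‖(α : 𝕜)‖ = 1 := by simp
  calc ‖f - (α : 𝕜) • g‖ = ‖(f' - (α : 𝕜) • g') + (f - f') - (α : 𝕜) • (g - g')‖ := by
        rw [smul_sub]; abel_nf
    _ ≤ ‖f' - (α : 𝕜) • g'‖ + ‖f - f'‖ + ‖(α : 𝕜) • (g - g')‖ :=
        norm_sub_le_of_le (norm_add_le _ _) le_rfl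
    _ = ‖f' - (α : 𝕜) • g'‖ + (‖f - f'‖ + ‖g - g'‖) := by
        rw [norm_smul, hα, one_mul, add_assoc]

variable {𝕜} {F : Type*} [SeminormedAddCommGroup F]

theorem phaseDist_le_of_approx {U : E → F} {L c : ℝ} (hU : ∀ a b, ‖U a - U b‖ ≤ L * ‖a - b‖)
    (hc : 0 ≤ c) {f g f' g' : E} (h' : phaseDist 𝕜 f' g' ≤ c * ‖U f' - U g'‖) :
    phaseDist 𝕜 f g ≤ c * ‖U f - U g‖ + (c * L + 1) * (‖f - f'‖ + ‖g - g'‖) := by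
  have hU' : ‖U f' - U g'‖ ≤ ‖U f - U g‖ + L * (‖f - f'‖ + ‖g - g'‖) := by
    have htri := dist_triangle4 (U f') (U f) (U g) (U g')
    simp only [dist_eq_norm] at htri
    linarith [norm_sub_rev f' f ▸ hU f' f, hU g g']
  calc phaseDist 𝕜 f g ≤ phaseDist 𝕜 f' g' + (‖f - f'‖ + ‖g - g'‖) := phaseDist_le_add 𝕜 _ _ _ _
    _ ≤ c * (‖U f - U g‖ + L * (‖f - f'‖ + ‖g - g'‖)) + (‖f - f'‖ + ‖g - g'‖) := by
        gcongr; exact h'.trans (by gcongr)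
    _ = c * ‖U f - U g‖ + (c * L + 1) * (‖f - f'‖ + ‖g - g'‖) := by ring

end PhaseDist

section Measurement

variable {𝕜 H : Type*} [RCLike 𝕜] [NormedAddCommGroup H] [InnerProductSpace 𝕜 H]
  {ι : Type*} (φ : ι → H) (hφ : ∀ f : H, Summable fun n => ‖(inner 𝕜 f (φ n) : 𝕜)‖ ^ 2)

theorem norm_lp_two_eq_sqrt_tsum_sq (x : lp (fun _ : ι => ℝ) 2) :
    ‖x‖ = √(∑' n, x n ^ 2) := by
  rw [lp.norm_eq_tsum_rpow (by norm_num) x, Real.sqrt_eq_rpow]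
  norm_num [Real.norm_eq_abs, sq_abs]

noncomputable def phaselessMeasurement (f : H) : lp (fun _ : ι => ℝ) 2 :=
  ⟨fun n => ‖(inner 𝕜 f (φ n) : 𝕜)‖, memℓp_gen <| by simpa [Real.norm_eq_abs] using hφ f⟩

theorem norm_phaselessMeasurement_sub (f g : H) :
    ‖phaselessMeasurement φ hφ f - phaselessMeasurement φ hφ g‖ =
      √(∑' n, (‖(inner 𝕜 f (φ n) : 𝕜)‖ - ‖(inner 𝕜 g (φ n) : 𝕜)‖) ^ 2) :=
  norm_lp_two_eq_sqrt_tsum_sq _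

theorem norm_phaselessMeasurement_sub_le {B : ℝ}
    (hB : ∀ f : H, ∑' n, ‖(inner 𝕜 f (φ n) : 𝕜)‖ ^ 2 ≤ B * ‖f‖ ^ 2) (f g : H) :
    ‖phaselessMeasurement φ hφ f - phaselessMeasurement φ hφ g‖ ≤ √B * ‖f - g‖ := by
  have hterm : ∀ n, (‖(inner 𝕜 f (φ n) : 𝕜)‖ - ‖(inner 𝕜 g (φ n) : 𝕜)‖) ^ 2 ≤
      ‖(inner 𝕜 (f - g) (φ n) : 𝕜)‖ ^ 2 := fun n => by
    rw [inner_sub_left]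
    exact sq_le_sq.mpr ((abs_norm_sub_norm_le _ _).trans (le_abs_self _))
  rw [norm_phaselessMeasurement_sub, ← Real.sqrt_sq (norm_nonneg (f - g)),
    ← Real.sqrt_mul' _ (sq_nonneg _)]
  refine Real.sqrt_le_sqrt ((Summable.tsum_le_tsum hterm ?_ (hφ _)).trans (hB _))
  exact (hφ (f - g)).of_nonneg_of_le (fun _ => sq_nonneg _) hterm

end Measurement

section Interpolation

variable {G : ℕ → ℝ} {γ K R N ε x : ℝ}

theorem exists_le_lt_succ_of_tendsto_atTop (hG : Tendsto G atTop atTop) {k : ℕ} {t : ℝ}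
    (hk : G k ≤ t) : ∃ m, G m ≤ t ∧ t < G (m + 1) := by
  by_contra! h
  obtain ⟨m, htm, hkm⟩ := ((hG.eventually_gt_atTop t).and (eventually_ge_atTop k)).exists
  have hle : ∀ n, k ≤ n → G n ≤ t := fun n hn => by
    induction n, hn using Nat.le_induction with
    | base => exact hk
    | succ n _ ih => exact h n ih
  exact (hle m hkm).not_gt htm

theorem le_mul_of_forall_level {t : ℝ} (hG : ∀ m, 0 < G m) (htop : Tendsto G atTop atTop)
    (hγ : 1 < γ) (hK : 0 ≤ K) (hR : 0 ≤ R) (hε : 0 ≤ ε) (ht : 0 ≤ t) (hNt : N = t ^ γ * ε)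
    (hxN : x ≤ N) (hx : ∀ m, x ≤ G m * ε + (G m * K + 1) * (G (m + 1) ^ (-γ) * R * N)) :
    x ≤ max (G 1 ^ (γ - 1)) (1 + K * R + R / G 1) * (t * ε) := by
  rcases lt_or_ge t (G 1) with ht1 | ht1
  · calc x ≤ N := hxN
      _ = t ^ (γ - 1) * (t * ε) := by
          rw [hNt, ← mul_assoc, ← Real.rpow_add_one' ht (by linarith), sub_add_cancel]
      _ ≤ G 1 ^ (γ - 1) * (t * ε) := by gcongr
      _ ≤ _ := by gcongr; exact le_max_left _ _
  obtain ⟨m, hmt, htm⟩ := exists_le_lt_succ_of_tendsto_atTop htop ht1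
  have htpos : 0 < t := (hG 1).trans_le ht1
  have hN : 0 ≤ N := hNt ▸ by positivity
  have hscale : G (m + 1) ^ (-γ) * R * N ≤ R * ε := by
    have hpow : G (m + 1) ^ (-γ) ≤ t ^ (-γ) :=
      Real.rpow_le_rpow_of_nonpos htpos htm.le (by linarith)
    calc G (m + 1) ^ (-γ) * R * N ≤ t ^ (-γ) * R * N := by gcongr
      _ = R * ε := by
          rw [hNt, mul_comm _ R, mul_assoc, ← mul_assoc (t ^ (-γ)), ← Real.rpow_add htpos,
            neg_add_cancel, Real.rpow_zero, one_mul]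
  have hRε : R * ε ≤ R / G 1 * (t * ε) := by
    rw [div_mul_eq_mul_div, le_div_iff₀ (hG 1)]
    nlinarith [mul_le_mul_of_nonneg_left ht1 (mul_nonneg hR hε)]
  calc x ≤ G m * ε + (G m * K + 1) * (G (m + 1) ^ (-γ) * R * N) := hx m
    _ ≤ t * ε + (t * K + 1) * (R * ε) := by
        gcongr
        exact mul_nonneg (mul_nonneg (Real.rpow_nonneg (hG _).le _) hR) hN
    _ = (1 + K * R) * (t * ε) + R * ε := by ring
    _ ≤ (1 + K * R) * (t * ε) + R / G 1 * (t * ε) := by gcongr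
    _ = (1 + K * R + R / G 1) * (t * ε) := by ring
    _ ≤ _ := by gcongr; exact le_max_right _ _

theorem le_mul_rpow_mul_rpow_of_forall_level_of_pos (hG : ∀ m, 0 < G m)
    (htop : Tendsto G atTop atTop) (hγ : 1 < γ) (hK : 0 ≤ K) (hR : 0 ≤ R) (hε : 0 < ε)
    (hN : 0 ≤ N) (hxN : x ≤ N)
    (hx : ∀ m, x ≤ G m * ε + (G m * K + 1) * (G (m + 1) ^ (-γ) * R * N)) :
    x ≤ max (G 1 ^ (γ - 1)) (1 + K * R + R / G 1) * (N ^ (1 / γ) * ε ^ ((γ - 1) / γ)) := by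
  have hγ0 : γ ≠ 0 := by positivity
  have hNt : N = ((N / ε) ^ (1 / γ)) ^ γ * ε := by
    rw [← Real.rpow_mul (div_nonneg hN hε.le), one_div_mul_cancel hγ0, Real.rpow_one,
      div_mul_cancel₀ _ hε.ne']
  have htε : (N / ε) ^ (1 / γ) * ε = N ^ (1 / γ) * ε ^ ((γ - 1) / γ) := by
    rw [show (γ - 1) / γ = 1 - 1 / γ by field_simp, Real.rpow_sub hε, Real.rpow_one,
      Real.div_rpow hN hε.le]
    ring
  rw [← htε]
  exact le_mul_of_forall_level hG htop hγ hK hR hε.le (by positivity) hNt hxN hx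

/-- The positive case extends to `ε = 0` because the level bounds only get weaker as `ε` grows,
while the right-hand side is continuous in `ε`. -/
theorem le_mul_rpow_mul_rpow_of_forall_level (hG : ∀ m, 0 < G m)
    (htop : Tendsto G atTop atTop) (hγ : 1 < γ) (hK : 0 ≤ K) (hR : 0 ≤ R) (hε : 0 ≤ ε)
    (hN : 0 ≤ N) (hxN : x ≤ N)
    (hx : ∀ m, x ≤ G m * ε + (G m * K + 1) * (G (m + 1) ^ (-γ) * R * N)) :
    x ≤ max (G 1 ^ (γ - 1)) (1 + K * R + R / G 1) * (N ^ (1 / γ) * ε ^ ((γ - 1) / γ)) := by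
  have hcont : ContinuousAt (fun e : ℝ => max (G 1 ^ (γ - 1)) (1 + K * R + R / G 1) *
      (N ^ (1 / γ) * e ^ ((γ - 1) / γ))) ε :=
    continuousAt_const.mul <| continuousAt_const.mul <|
      Real.continuousAt_rpow_const _ _ (Or.inr (div_nonneg (by linarith) (by linarith)))
  refine ge_of_tendsto (hcont.tendsto.mono_left nhdsWithin_le_nhds :
    Tendsto _ (𝓝[>] ε) _) ?_
  filter_upwards [self_mem_nhdsWithin] with e (he : ε < e)
  refine le_mul_rpow_mul_rpow_of_forall_level_of_pos hG htop hγ hK hR (hε.trans_lt he) hN hxN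
    fun m => (hx m).trans ?_
  gcongr
  exact (hG m).le

end Interpolation

theorem holder_stability_on_approximable_signals_general
    {𝕜 H : Type*} [RCLike 𝕜] [NormedAddCommGroup H] [InnerProductSpace 𝕜 H]
    (φ : ℕ → H) (A B : ℝ)
    (hframe : ∀ f : H, ∃ s : ℝ,
      HasSum (fun n => ‖(inner 𝕜 f (φ n) : 𝕜)‖ ^ 2) s ∧ A * ‖f‖ ^ 2 ≤ s ∧ s ≤ B * ‖f‖ ^ 2)
    (V : ℕ → Submodule 𝕜 H) [∀ m, FiniteDimensional 𝕜 (V m)]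
    (G : ℕ → ℝ) (hGpos : ∀ m, 0 < G m)
    (hGtop : Filter.Tendsto G Filter.atTop Filter.atTop)
    (hG : ∀ m, ∀ f ∈ V m, ∀ g ∈ V m,
      (⨅ α : Metric.sphere (0 : 𝕜) 1, ‖f - (α : 𝕜) • g‖) ≤
        G m * Real.sqrt (∑' n, (‖(inner 𝕜 f (φ n) : 𝕜)‖ - ‖(inner 𝕜 g (φ n) : 𝕜)‖) ^ 2))
    (γ R : ℝ) (hγ : 1 < γ) (hR : 0 < R) :
    ∃ C : ℝ, ∀ f g : H,
      (∀ m, ‖f - (Submodule.orthogonalProjection (V m) f : H)‖ ≤ G (m + 1) ^ (-γ) * R * ‖f‖) →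
      (∀ m, ‖g - (Submodule.orthogonalProjection (V m) g : H)‖ ≤ G (m + 1) ^ (-γ) * R * ‖g‖) →
      (⨅ α : Metric.sphere (0 : 𝕜) 1, ‖f - (α : 𝕜) • g‖) ≤
        C * (‖f‖ + ‖g‖) ^ (1 / γ) *
          Real.sqrt (∑' n, (‖(inner 𝕜 f (φ n) : 𝕜)‖ - ‖(inner 𝕜 g (φ n) : 𝕜)‖) ^ 2)
            ^ ((γ - 1) / γ) := by
  have hsum (f : H) : Summable fun n => ‖(inner 𝕜 f (φ n) : 𝕜)‖ ^ 2 :=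
    (hframe f).choose_spec.1.summable
  have hbessel (f : H) : ∑' n, ‖(inner 𝕜 f (φ n) : 𝕜)‖ ^ 2 ≤ B * ‖f‖ ^ 2 := by
    obtain ⟨s, hs, -, hsB⟩ := hframe f
    rwa [hs.tsum_eq]
  set U := phaselessMeasurement φ hsum
  refine ⟨max (G 1 ^ (γ - 1)) (1 + √B * R + R / G 1), fun f g hf hg => ?_⟩
  rw [← norm_phaselessMeasurement_sub φ hsum, mul_assoc]
  refine le_mul_rpow_mul_rpow_of_forall_level hGpos hGtop hγ (Real.sqrt_nonneg B) hR.le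
    (norm_nonneg _) (by positivity) (phaseDist_le_norm_add 𝕜 f g) fun m => ?_
  set P := (V m).orthogonalProjectionOnto
  calc phaseDist 𝕜 f g ≤ G m * ‖U f - U g‖ + (G m * √B + 1) * (‖f - P f‖ + ‖g - P g‖) := by
        refine phaseDist_le_of_approx (norm_phaselessMeasurement_sub_le φ hsum hbessel)
          (hGpos m).le ?_
        rw [norm_phaselessMeasurement_sub]
        exact hG m _ (P f).2 _ (P g).2
    _ ≤ G m * ‖U f - U g‖ + (G m * √B + 1) * (G (m + 1) ^ (-γ) * R * (‖f‖ + ‖g‖)) := by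
        have hGm : 0 ≤ G m * √B + 1 :=
          add_nonneg (mul_nonneg (hGpos m).le (Real.sqrt_nonneg B)) zero_le_one
        gcongr
        linarith [hf m, hg m]

/-- Hölder-type stability of phase retrieval on the set `B_γ(R)` of signals
well approximated by the finite-dimensional subspaces `V m`: if phase retrieval on each
`V m` is stable with constant `G m`, then for `f, g ∈ B_γ(R)`,
`inf_{|α|=1} ‖f - α g‖ ≤ C (‖f‖ + ‖g‖)^{1/γ} ‖A_Φ(f) - A_Φ(g)‖^{(γ-1)/γ}`. -/
theorem holder_stability_on_approximable_signals
    {𝕜 H : Type*} [RCLike 𝕜] [NormedAddCommGroup H] [InnerProductSpace 𝕜 H]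
    [CompleteSpace H] [TopologicalSpace.SeparableSpace H]
    (hinf : ¬ FiniteDimensional 𝕜 H)
    (φ : ℕ → H) (A B : ℝ) (hA : 0 < A) (hAB : A ≤ B)
    (hframe : ∀ f : H, ∃ s : ℝ,
      HasSum (fun n => ‖(inner 𝕜 f (φ n) : 𝕜)‖ ^ 2) s ∧ A * ‖f‖ ^ 2 ≤ s ∧ s ≤ B * ‖f‖ ^ 2)
    (V : ℕ → Submodule 𝕜 H) [∀ m, FiniteDimensional 𝕜 (V m)]
    (hVdim : ∀ m, Module.finrank 𝕜 (V m) < Module.finrank 𝕜 (V (m + 1)))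
    (G : ℕ → ℝ) (hGpos : ∀ m, 0 < G m) (hGmono : Monotone G)
    (hGtop : Filter.Tendsto G Filter.atTop Filter.atTop)
    (hG : ∀ m, ∀ f ∈ V m, ∀ g ∈ V m,
      (⨅ α : Metric.sphere (0 : 𝕜) 1, ‖f - (α : 𝕜) • g‖) ≤
        G m * Real.sqrt (∑' n, (‖(inner 𝕜 f (φ n) : 𝕜)‖ - ‖(inner 𝕜 g (φ n) : 𝕜)‖) ^ 2))
    (γ R : ℝ) (hγ : 1 < γ) (hR : 0 < R) :
    ∃ C : ℝ, ∀ f g : H,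
      (∀ m, ‖f - (Submodule.orthogonalProjection (V m) f : H)‖ ≤ G (m + 1) ^ (-γ) * R * ‖f‖) →
      (∀ m, ‖g - (Submodule.orthogonalProjection (V m) g : H)‖ ≤ G (m + 1) ^ (-γ) * R * ‖g‖) →
      (⨅ α : Metric.sphere (0 : 𝕜) 1, ‖f - (α : 𝕜) • g‖) ≤
        C * (‖f‖ + ‖g‖) ^ (1 / γ) *
          Real.sqrt (∑' n, (‖(inner 𝕜 f (φ n) : 𝕜)‖ - ‖(inner 𝕜 g (φ n) : 𝕜)‖) ^ 2)
            ^ ((γ - 1) / γ) :=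
  holder_stability_on_approximable_signals_general φ A B hframe V G hGpos hGtop hG γ R hγ hR
end

section
/- Let H be an infinite-dimensional separable Hilbert space and let {φ_n}_{n∈ℕ} be a frame for H. Let V be a finite-dimensional subspace of H with dim(V) = M, and suppose the projected family {P_V φ_n}_{n∈ℕ} does phase retrieval for V. Then there exists a finite subset I ⊂ ℕ with |I| ≤ M² such that {P_V φ_n}_{n∈I} does phase retrieval for V. -/
/-!
For `f = ∑ i, c i • e i` in `V` (`e` a basis of `V`), the intensity `n ↦ |⟨f, φ n⟩|²` is a
real quadratic form in `c`, so it lies in the real span `W` of the real and imaginary parts of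
the products `⟨e i, φ n⟩ * conj ⟨e j, φ n⟩`; by conjugate symmetry `M²` of these functions
suffice, so `dim W ≤ M²`. A space of functions of dimension `d` is determined by its values at
some `d` points (choose evaluations forming a basis of the span of all evaluations in the dual).
If `f, g` have equal intensities on such a set `I`, the difference of their intensities is an
element of `W` vanishing on `I`, hence everywhere, and phase retrieval by the whole family
applies.
-/

open Module Submodule Set ComplexConjugate

theorem Submodule.exists_finset_card_le_finrank_eq_zero_of_eqOn {K ι : Type*} [Field K]
    (W : Submodule K (ι → K)) [FiniteDimensional K W] :
    ∃ I : Finset ι, I.card ≤ finrank K W ∧ ∀ w ∈ W, EqOn w 0 I → w = 0 := by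
  classical
  let ev : ι → Dual K W := fun i => (LinearMap.proj i).comp W.subtype
  obtain ⟨κ, a, -, hspan, hli⟩ := exists_linearIndependent' K ev
  have : Fintype κ := have := hli.finite; Fintype.ofFinite κ
  refine ⟨Finset.univ.image a, ?_, fun w hw hI => ?_⟩
  · calc (Finset.univ.image a).card ≤ Fintype.card κ := Finset.card_image_le
      _ ≤ finrank K (Dual K W) := hli.fintype_card_le_finrank
      _ = finrank K W := Subspace.dual_finrank_eq
  · have hker : span K (range ev) ≤ LinearMap.ker (Dual.eval K W ⟨w, hw⟩) := by
      rw [← hspan, span_le]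
      rintro _ ⟨k, rfl⟩
      exact hI (Finset.mem_coe.2 (Finset.mem_image_of_mem a (Finset.mem_univ k)))
    funext i
    exact hker (subset_span ⟨i, rfl⟩)

section ReImProducts

variable {𝕜 ι α : Type*} [RCLike 𝕜] [LinearOrder ι]

/-- Since `a j n * conj (a i n) = conj (a i n * conj (a j n))`, the real parts for `i ≤ j` and the
imaginary parts for `j < i` already span all real and imaginary parts of these products. -/
noncomputable def reImProducts (a : ι → α → 𝕜) (p : ι × ι) (n : α) : ℝ :=
  if p.1 ≤ p.2 then RCLike.re (a p.1 n * conj (a p.2 n)) else RCLike.im (a p.1 n * conj (a p.2 n))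

theorem re_mul_conj_mem_span_reImProducts (a : ι → α → 𝕜) (i j : ι) :
    (fun n => RCLike.re (a i n * conj (a j n))) ∈ span ℝ (range (reImProducts a)) := by
  rcases le_total i j with hij | hji
  · exact subset_span ⟨(i, j), funext fun n => if_pos hij⟩
  · refine subset_span ⟨(j, i), funext fun n => ?_⟩
    rw [reImProducts, if_pos hji, ← RCLike.conj_re]
    simp only [starRingEnd_apply, star_mul_star]

theorem im_mul_conj_mem_span_reImProducts (a : ι → α → 𝕜) (i j : ι) :
    (fun n => RCLike.im (a i n * conj (a j n))) ∈ span ℝ (range (reImProducts a)) := by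
  rcases lt_trichotomy i j with hij | rfl | hji
  · have : (fun n => RCLike.im (a i n * conj (a j n))) = -reImProducts a (j, i) := by
      funext n
      rw [Pi.neg_apply, reImProducts, if_neg (not_le.2 hij), ← RCLike.conj_im]
      simp only [starRingEnd_apply, star_mul_star]
    exact this ▸ neg_mem (subset_span ⟨(j, i), rfl⟩)
  · have : (fun n => RCLike.im (a i n * conj (a i n))) = 0 := by
      funext n
      rw [RCLike.mul_conj, ← RCLike.ofReal_pow, RCLike.ofReal_im, Pi.zero_apply]
    exact this ▸ zero_mem _
  · exact subset_span ⟨(i, j), funext fun n => if_neg (not_le.2 hji)⟩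

theorem norm_sum_mul_sq_mem_span_reImProducts [Fintype ι] (a : ι → α → 𝕜) (c : ι → 𝕜) :
    (fun n => ‖∑ i, c i * a i n‖ ^ 2) ∈ span ℝ (range (reImProducts a)) := by
  have hexpand : (fun n => ‖∑ i, c i * a i n‖ ^ 2) = ∑ i, ∑ j,
      (RCLike.re (c i * conj (c j)) • (fun n => RCLike.re (a i n * conj (a j n))) -
        RCLike.im (c i * conj (c j)) • fun n => RCLike.im (a i n * conj (a j n))) := by
    funext n
    rw [← RCLike.ofReal_re (K := 𝕜) (_ ^ 2), RCLike.ofReal_pow, ← RCLike.mul_conj, map_sum,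
      Finset.sum_mul_sum, map_sum]
    simp only [Finset.sum_apply, Pi.sub_apply, Pi.smul_apply, smul_eq_mul, map_sum]
    refine Finset.sum_congr rfl fun i _ => Finset.sum_congr rfl fun j _ => ?_
    rw [← RCLike.mul_re, map_mul (starRingEnd 𝕜)]
    congr 1
    ring
  rw [hexpand]
  exact sum_mem fun i _ => sum_mem fun j _ =>
    sub_mem (smul_mem _ _ (re_mul_conj_mem_span_reImProducts a i j))
      (smul_mem _ _ (im_mul_conj_mem_span_reImProducts a i j))

theorem finrank_span_reImProducts_le [Fintype ι] (a : ι → α → 𝕜) :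
    finrank ℝ (span ℝ (range (reImProducts a))) ≤ Fintype.card ι ^ 2 :=
  (finrank_range_le_card _).trans (by rw [Fintype.card_prod, sq])

end ReImProducts

theorem norm_inner_sq_mem_span_reImProducts {𝕜 H ι α : Type*} [RCLike 𝕜]
    [NormedAddCommGroup H] [InnerProductSpace 𝕜 H] [Fintype ι] [LinearOrder ι]
    (e : ι → H) (φ : α → H) {f : H} (hf : f ∈ span 𝕜 (range e)) :
    (fun n => ‖(inner 𝕜 f (φ n) : 𝕜)‖ ^ 2) ∈
      span ℝ (range (reImProducts fun i n => (inner 𝕜 (e i) (φ n) : 𝕜))) := by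
  obtain ⟨c, rfl⟩ := (mem_span_range_iff_exists_fun 𝕜).1 hf
  simp only [sum_inner, inner_smul_left]
  exact norm_sum_mul_sq_mem_span_reImProducts _ _

theorem finite_subfamily_phase_retrieval_on_subspace_general
    {𝕜 H : Type*} [RCLike 𝕜] [NormedAddCommGroup H] [InnerProductSpace 𝕜 H]
    (φ : ℕ → H)
    (V : Submodule 𝕜 H) [FiniteDimensional 𝕜 V] (M : ℕ)
    (hM : Module.finrank 𝕜 V = M)
    (hPR : ∀ f ∈ V, ∀ g ∈ V,
      (∀ n : ℕ, ‖(inner 𝕜 f (φ n) : 𝕜)‖ = ‖(inner 𝕜 g (φ n) : 𝕜)‖) →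
      ∃ α : 𝕜, ‖α‖ = 1 ∧ f = α • g) :
    ∃ I : Finset ℕ, I.card ≤ M ^ 2 ∧
      ∀ f ∈ V, ∀ g ∈ V,
        (∀ n ∈ I, ‖(inner 𝕜 f (φ n) : 𝕜)‖ = ‖(inner 𝕜 g (φ n) : 𝕜)‖) →
        ∃ α : 𝕜, ‖α‖ = 1 ∧ f = α • g := by
  let b := finBasisOfFinrankEq 𝕜 V hM
  let e : Fin M → H := fun i => b i
  have hV : ∀ f ∈ V, f ∈ span 𝕜 (range e) := fun f hf =>
    (mem_span_range_iff_exists_fun 𝕜).2 ⟨b.repr ⟨f, hf⟩, by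
      simp_rw [e, ← coe_smul, ← coe_sum, b.sum_repr]⟩
  set W := span ℝ (range (reImProducts fun i n => (inner 𝕜 (e i) (φ n) : 𝕜)))
  have : FiniteDimensional ℝ W := FiniteDimensional.span_of_finite ℝ (finite_range _)
  obtain ⟨I, hIcard, hI⟩ := W.exists_finset_card_le_finrank_eq_zero_of_eqOn
  refine ⟨I, hIcard.trans ((finrank_span_reImProducts_le _).trans_eq (by simp)),
    fun f hf g hg hfgI => hPR f hf g hg fun n => ?_⟩
  have hdiff := hI _ (sub_mem (norm_inner_sq_mem_span_reImProducts e φ (hV f hf))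
    (norm_inner_sq_mem_span_reImProducts e φ (hV g hg))) fun n hn => by simp [hfgI n hn]
  have hsq := sub_eq_zero.1 (congrFun hdiff n)
  exact (pow_left_inj₀ (norm_nonneg _) (norm_nonneg _) two_ne_zero).1 hsq

/-- Let `{φ n}_{n ∈ ℕ}` be a frame for an infinite-dimensional separable
Hilbert space `H`, and let `V ⊆ H` be a finite-dimensional subspace with `dim V = M`.
If the projected family `{P_V φ n}` does phase retrieval for `V` (equivalently, any `f ∈ V`
is determined up to phase by `(|⟨f, φ n⟩|)_n`, since `⟨f, P_V φ n⟩ = ⟨f, φ n⟩` for `f ∈ V`),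
then some finite subfamily indexed by `I ⊂ ℕ` with `|I| ≤ M²` does phase retrieval for `V`. -/
theorem finite_subfamily_phase_retrieval_on_subspace
    {𝕜 H : Type*} [RCLike 𝕜] [NormedAddCommGroup H] [InnerProductSpace 𝕜 H]
    [CompleteSpace H] [TopologicalSpace.SeparableSpace H]
    (hinf : ¬ FiniteDimensional 𝕜 H)
    (φ : ℕ → H) (A B : ℝ) (hA : 0 < A) (hAB : A ≤ B)
    (hframe : ∀ f : H, ∃ s : ℝ,
      HasSum (fun n => ‖(inner 𝕜 f (φ n) : 𝕜)‖ ^ 2) s ∧ A * ‖f‖ ^ 2 ≤ s ∧ s ≤ B * ‖f‖ ^ 2)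
    (V : Submodule 𝕜 H) [FiniteDimensional 𝕜 V] (M : ℕ)
    (hM : Module.finrank 𝕜 V = M)
    (hPR : ∀ f ∈ V, ∀ g ∈ V,
      (∀ n : ℕ, ‖(inner 𝕜 f (φ n) : 𝕜)‖ = ‖(inner 𝕜 g (φ n) : 𝕜)‖) →
      ∃ α : 𝕜, ‖α‖ = 1 ∧ f = α • g) :
    ∃ I : Finset ℕ, I.card ≤ M ^ 2 ∧
      ∀ f ∈ V, ∀ g ∈ V,
        (∀ n ∈ I, ‖(inner 𝕜 f (φ n) : 𝕜)‖ = ‖(inner 𝕜 g (φ n) : 𝕜)‖) →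
        ∃ α : 𝕜, ‖α‖ = 1 ∧ f = α • g :=
  finite_subfamily_phase_retrieval_on_subspace_general φ V M hM hPR
end

section
/- Let f, g ∈ ℂ^N with ‖f‖ ≥ ‖g‖. Then the operator norm of the Hermitian rank-≤2 matrix ff* − gg* equals (1/2)(‖f‖² − ‖g‖² + ((‖f‖² + ‖g‖²)² − 4|⟨f,g⟩|²)^{1/2}); in particular, the largest (in absolute value) eigenvalue of ff* − gg* is this quantity. -/
/-!
`T = ff* - gg*` is self-adjoint and maps into `span {f, g}`, where it acts by the matrix
`[[‖f‖², ⟪f, g⟫], [-⟪g, f⟫, -‖g‖²]]`. By Cayley–Hamilton, `T³ = s T² + t T` with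
`s = ‖f‖² - ‖g‖²` and `t = ‖f‖²‖g‖² - |⟪f, g⟫|² ≥ 0`, so the spectrum of `T` lies among `0` and the
roots `(s ± √(s² + 4t)) / 2` of `μ² = s μ + t`, the larger of which, `λ`, dominates in absolute
value because `s ≥ 0`. For a self-adjoint operator the norm is the spectral radius, whence
`‖T‖ ≤ λ`; conversely `(λ + ‖g‖²) f - ⟪g, f⟫ g` is an eigenvector for `λ`.
-/

open scoped InnerProductSpace ComplexConjugate
open InnerProductSpace Polynomial

variable {𝕜 E : Type*} [RCLike 𝕜]

lemma RCLike.norm_le_of_pow_three_eq {μ : 𝕜} {s t : ℝ} (hs : 0 ≤ s) (ht : 0 ≤ t)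
    (h : μ ^ 3 = s * μ ^ 2 + t * μ) : ‖μ‖ ≤ (s + √(s ^ 2 + 4 * t)) / 2 := by
  set S := √(s ^ 2 + 4 * t)
  have hS : 0 ≤ S := Real.sqrt_nonneg _
  have hS2 : (S : 𝕜) ^ 2 = (s : 𝕜) ^ 2 + 4 * t := by
    exact_mod_cast Real.sq_sqrt (by positivity : 0 ≤ s ^ 2 + 4 * t)
  obtain rfl | hμ := eq_or_ne μ 0
  · rw [norm_zero]; positivity
  have hquad : μ ^ 2 = s * μ + t := mul_left_cancel₀ hμ (by linear_combination h)
  have hsq : (2 * μ - s) ^ 2 = (S : 𝕜) ^ 2 := by linear_combination 4 * hquad - hS2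
  rcases sq_eq_sq_iff_eq_or_eq_neg.mp hsq with hroot | hroot
  · have : μ = ((s + S) / 2 : ℝ) := by push_cast; linear_combination hroot / 2
    rw [this, RCLike.norm_ofReal, abs_of_nonneg (by positivity)]
  · have : μ = ((s - S) / 2 : ℝ) := by push_cast; linear_combination hroot / 2
    rw [this, RCLike.norm_ofReal, abs_le]
    constructor <;> linarith

lemma spectrum.eq_zero_of_mem_zero {A : Type*} [Ring A] [Algebra 𝕜 A] {μ : 𝕜}
    (h : μ ∈ spectrum 𝕜 (0 : A)) : μ = 0 := by
  by_contra hne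
  exact h (by simpa [resolventSet] using (Units.mk0 μ hne).isUnit.map (algebraMap 𝕜 A))

lemma ContinuousLinearMap.norm_le_opNorm_of_apply_eq_smul {F : Type*} [NormedAddCommGroup F]
    [NormedSpace 𝕜 F] (T : F →L[𝕜] F) {μ : 𝕜} {z : F} (hz : z ≠ 0) (h : T z = μ • z) :
    ‖μ‖ ≤ ‖T‖ :=
  le_of_mul_le_mul_right (by simpa [h, norm_smul] using T.le_opNorm z) (norm_pos_iff.2 hz)

variable [NormedAddCommGroup E] [InnerProductSpace 𝕜 E]

lemma IsSelfAdjoint.norm_le_of_pow_three_eq [CompleteSpace E] {T : E →L[𝕜] E}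
    (hT : IsSelfAdjoint T) {s t : ℝ} (hs : 0 ≤ s) (ht : 0 ≤ t)
    (h : T ^ 3 = (s : 𝕜) • T ^ 2 + (t : 𝕜) • T) : ‖T‖ ≤ (s + √(s ^ 2 + 4 * t)) / 2 := by
  have hroot : ∀ μ ∈ spectrum 𝕜 T, μ ^ 3 = s * μ ^ 2 + t * μ := by
    intro μ hμ
    have := spectrum.subset_polynomial_aeval T (X ^ 3 - C (s : 𝕜) * X ^ 2 - C (t : 𝕜) * X)
      ⟨μ, hμ, rfl⟩
    simp only [aeval_sub, map_pow, aeval_X, h, Algebra.smul_def, map_mul, aeval_C,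
      add_sub_cancel_left, sub_self, eval_sub, eval_pow, eval_X, eval_mul, eval_C] at this
    linear_combination spectrum.eq_zero_of_mem_zero this
  rw [← coe_nnnorm, ← ENNReal.coe_toReal, ← T.spectralRadius_eq_nnnorm hT]
  refine ENNReal.toReal_le_of_le_ofReal (by positivity) (iSup₂_le fun μ hμ => ?_)
  rw [← ENNReal.ofReal_coe_nnreal, coe_nnnorm]
  exact ENNReal.ofReal_le_ofReal (RCLike.norm_le_of_pow_three_eq hs ht (hroot μ hμ))

lemma isSelfAdjoint_rankOne_sub_rankOne [CompleteSpace E] (f g : E) :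
    IsSelfAdjoint (rankOne 𝕜 f f - rankOne 𝕜 g g) := by
  simp [IsSelfAdjoint, ContinuousLinearMap.star_eq_adjoint]

lemma rankOne_sub_rankOne_pow_three (f g : E) :
    (rankOne 𝕜 f f - rankOne 𝕜 g g) ^ 3 =
      ((‖f‖ ^ 2 - ‖g‖ ^ 2 : ℝ) : 𝕜) • (rankOne 𝕜 f f - rankOne 𝕜 g g) ^ 2 +
      ((‖f‖ ^ 2 * ‖g‖ ^ 2 - ‖⟪f, g⟫_𝕜‖ ^ 2 : ℝ) : 𝕜) • (rankOne 𝕜 f f - rankOne 𝕜 g g) := by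
  have hc : ((‖⟪f, g⟫_𝕜‖ : ℝ) : 𝕜) ^ 2 = ⟪f, g⟫_𝕜 * conj ⟪f, g⟫_𝕜 := (RCLike.mul_conj _).symm
  simp only [pow_succ, pow_zero, one_mul, ContinuousLinearMap.mul_def,
    ContinuousLinearMap.sub_comp, ContinuousLinearMap.comp_sub, rankOne_comp_rankOne,
    ContinuousLinearMap.smul_comp]
  rw [inner_self_eq_norm_sq_to_K, inner_self_eq_norm_sq_to_K, ← inner_conj_symm g f]
  push_cast
  linear_combination (norm := module) hc • (rankOne 𝕜 f f - rankOne 𝕜 g g)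

lemma rankOne_sub_rankOne_apply_eigenvector (f g : E) {l : ℝ}
    (h : (l + ‖g‖ ^ 2) * (‖f‖ ^ 2 - l) = ‖⟪f, g⟫_𝕜‖ ^ 2) :
    (rankOne 𝕜 f f - rankOne 𝕜 g g) (((l + ‖g‖ ^ 2 : ℝ) : 𝕜) • f - conj ⟪f, g⟫_𝕜 • g) =
      (l : 𝕜) • (((l + ‖g‖ ^ 2 : ℝ) : 𝕜) • f - conj ⟪f, g⟫_𝕜 • g) := by
  have h' : ((l : 𝕜) + ‖g‖ ^ 2) * (‖f‖ ^ 2 - l) = ⟪f, g⟫_𝕜 * conj ⟪f, g⟫_𝕜 := by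
    rw [RCLike.mul_conj]; exact_mod_cast h
  simp only [sub_apply, rankOne_apply, inner_sub_right, inner_smul_right,
    inner_self_eq_norm_sq_to_K, ← inner_conj_symm g f]
  push_cast
  linear_combination (norm := module) h' • f

lemma le_norm_rankOne_sub_rankOne (f g : E) {l : ℝ} (hl : 0 ≤ l)
    (h : (l + ‖g‖ ^ 2) * (‖f‖ ^ 2 - l) = ‖⟪f, g⟫_𝕜‖ ^ 2) :
    l ≤ ‖rankOne 𝕜 f f - rankOne 𝕜 g g‖ := by
  obtain rfl | hl := hl.eq_or_lt
  · exact norm_nonneg _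
  set z : E := ((l + ‖g‖ ^ 2 : ℝ) : 𝕜) • f - conj ⟪f, g⟫_𝕜 • g
  have hfz : ⟪f, z⟫_𝕜 = (((l + ‖g‖ ^ 2) * l : ℝ) : 𝕜) := by
    have h' : ((l : 𝕜) + ‖g‖ ^ 2) * (‖f‖ ^ 2 - l) = ⟪f, g⟫_𝕜 * conj ⟪f, g⟫_𝕜 := by
      rw [RCLike.mul_conj]; exact_mod_cast h
    simp only [z, inner_sub_right, inner_smul_right, inner_self_eq_norm_sq_to_K]
    push_cast
    linear_combination h'
  have hz : z ≠ 0 := by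
    rintro hz
    rw [hz, inner_zero_right, eq_comm, RCLike.ofReal_eq_zero] at hfz
    nlinarith [sq_nonneg ‖g‖]
  simpa [abs_of_pos hl] using
    (rankOne 𝕜 f f - rankOne 𝕜 g g).norm_le_opNorm_of_apply_eq_smul hz
      (rankOne_sub_rankOne_apply_eigenvector f g h)

/-- For `f, g ∈ ℂ^N` with `‖f‖ ≥ ‖g‖`, the operator norm of the Hermitian
rank-`≤ 2` operator `ff* - gg*` (where `hh*` maps `x` to `⟨x, h⟩ h`) equals
`(1/2)(‖f‖² - ‖g‖² + ((‖f‖² + ‖g‖²)² - 4|⟨f, g⟩|²)^{1/2})`. -/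
theorem opNorm_rank_two_difference
    {N : ℕ} (f g : EuclideanSpace ℂ (Fin N)) (hfg : ‖g‖ ≤ ‖f‖) :
    ‖(innerSL ℂ f).smulRight f - (innerSL ℂ g).smulRight g‖ =
      (1 / 2) * (‖f‖ ^ 2 - ‖g‖ ^ 2 +
        Real.sqrt ((‖f‖ ^ 2 + ‖g‖ ^ 2) ^ 2 - 4 * ‖(inner ℂ f g : ℂ)‖ ^ 2)) := by
  rw [← rankOne_def, ← rankOne_def]
  set s := ‖f‖ ^ 2 - ‖g‖ ^ 2
  set t := ‖f‖ ^ 2 * ‖g‖ ^ 2 - ‖⟪f, g⟫_ℂ‖ ^ 2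
  have hs : 0 ≤ s := sub_nonneg.2 (pow_le_pow_left₀ (norm_nonneg g) hfg 2)
  have ht : 0 ≤ t := by
    rw [sub_nonneg, ← mul_pow]
    exact pow_le_pow_left₀ (norm_nonneg _) (norm_inner_le_norm f g) 2
  have hdisc : (‖f‖ ^ 2 + ‖g‖ ^ 2) ^ 2 - 4 * ‖⟪f, g⟫_ℂ‖ ^ 2 = s ^ 2 + 4 * t := by ring
  have hS2 : √(s ^ 2 + 4 * t) ^ 2 = s ^ 2 + 4 * t := Real.sq_sqrt (by positivity)
  rw [hdisc]
  apply le_antisymm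
  · have := (isSelfAdjoint_rankOne_sub_rankOne f g).norm_le_of_pow_three_eq hs ht
      (rankOne_sub_rankOne_pow_three f g)
    linarith
  · apply le_norm_rankOne_sub_rankOne f g (by positivity)
    linear_combination (-1 / 4 : ℝ) * hS2
end

section
/- Let f, g ∈ ℂ^N with ‖f‖ = 1 and ‖g‖ ≤ 1. Then inf_{|α|=1} ‖f − αg‖ ≤ 2 ‖ff* − gg*‖, where ‖ff* − gg*‖ is the operator norm. -/
/-!
Write `T = ff* - gg*` and `b = ⟪g, f⟫`, so `|b| ≤ 1`. Since `‖f‖ = 1`, `T f = f - b g`,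
hence `‖f - b g‖ ≤ ‖T‖`, and `⟪f, T f⟫ = 1 - |b|²`, hence `1 - |b|² ≤ ‖T‖`. Taking for `α`
the phase of `b`, `|b - α| = 1 - |b| ≤ 1 - |b|²`, so `‖f - α g‖ ≤ ‖f - b g‖ + |b - α| ≤ 2 ‖T‖`.
-/

open InnerProductSpace Complex

section RankOne

variable {𝕜 E : Type*} [RCLike 𝕜] [SeminormedAddCommGroup E] [InnerProductSpace 𝕜 E]
  {f : E} (g : E)

theorem rankOne_sub_rankOne_apply_of_norm_eq_one (hf : ‖f‖ = 1) :
    (rankOne 𝕜 f f - rankOne 𝕜 g g) f = f - inner 𝕜 g f • g := by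
  simp [inner_self_eq_norm_sq_to_K, hf]

theorem norm_sub_inner_smul_le_opNorm (hf : ‖f‖ = 1) :
    ‖f - inner 𝕜 g f • g‖ ≤ ‖rankOne 𝕜 f f - rankOne 𝕜 g g‖ := by
  simpa [hf, rankOne_sub_rankOne_apply_of_norm_eq_one g hf] using
    (rankOne 𝕜 f f - rankOne 𝕜 g g).le_opNorm f

theorem one_sub_norm_inner_sq_le_opNorm (hf : ‖f‖ = 1) :
    1 - ‖inner 𝕜 g f‖ ^ 2 ≤ ‖rankOne 𝕜 f f - rankOne 𝕜 g g‖ := by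
  set T := rankOne 𝕜 f f - rankOne 𝕜 g g
  have hre : RCLike.re (inner 𝕜 f (T f)) = 1 - ‖inner 𝕜 g f‖ ^ 2 := by
    rw [rankOne_sub_rankOne_apply_of_norm_eq_one g hf, inner_sub_right, inner_smul_right,
      inner_self_eq_norm_sq_to_K, hf, ← inner_conj_symm f g, RCLike.mul_conj]
    norm_cast
    simp
  calc 1 - ‖inner 𝕜 g f‖ ^ 2 = RCLike.re (inner 𝕜 f (T f)) := hre.symm
    _ ≤ ‖inner 𝕜 f (T f)‖ := RCLike.re_le_norm _
    _ ≤ ‖f‖ * ‖T f‖ := norm_inner_le_norm _ _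
    _ ≤ ‖T‖ := by simpa [hf] using T.le_opNorm f

end RankOne

theorem Complex.norm_sub_exp_arg_mul_I (z : ℂ) : ‖z - exp (arg z * I)‖ = |‖z‖ - 1| := by
  nth_rewrite 1 [← norm_mul_exp_arg_mul_I z]
  rw [← sub_one_mul, norm_mul, norm_exp_ofReal_mul_I, mul_one]
  norm_cast

/-- For `f, g ∈ ℂ^N` with `‖f‖ = 1` and `‖g‖ ≤ 1`,
`inf_{|α|=1} ‖f - α g‖ ≤ 2 ‖ff* - gg*‖`, where `hh*` maps `x` to `⟨x, h⟩ h` and the norm on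
the right is the operator norm. -/
theorem quotient_dist_le_opNorm_rank_two
    {N : ℕ} (f g : EuclideanSpace ℂ (Fin N)) (hf : ‖f‖ = 1) (hg : ‖g‖ ≤ 1) :
    (⨅ α : Metric.sphere (0 : ℂ) 1, ‖f - (α : ℂ) • g‖) ≤
      2 * ‖(innerSL ℂ f).smulRight f - (innerSL ℂ g).smulRight g‖ := by
  change _ ≤ 2 * ‖rankOne ℂ f f - rankOne ℂ g g‖
  set b := inner ℂ g f
  set α := exp (arg b * I)
  have hb : ‖b‖ ≤ 1 := (norm_inner_le_norm g f).trans (by rwa [hf, mul_one])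
  have hbα : ‖b - α‖ = 1 - ‖b‖ := by
    rw [norm_sub_exp_arg_mul_I, abs_of_nonpos (by linarith), neg_sub]
  have hα : α ∈ Metric.sphere (0 : ℂ) 1 := by simp [α, norm_exp_ofReal_mul_I]
  have h₁ := norm_sub_inner_smul_le_opNorm (𝕜 := ℂ) g hf
  have h₂ := one_sub_norm_inner_sq_le_opNorm (𝕜 := ℂ) g hf
  calc (⨅ β : Metric.sphere (0 : ℂ) 1, ‖f - (β : ℂ) • g‖) ≤ ‖f - α • g‖ :=
        ciInf_le ⟨0, Set.forall_mem_range.2 fun _ => norm_nonneg _⟩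
          (⟨α, hα⟩ : Metric.sphere (0 : ℂ) 1)
    _ = ‖(f - b • g) + (b - α) • g‖ := by rw [sub_smul]; abel_nf
    _ ≤ ‖f - b • g‖ + (1 - ‖b‖) * ‖g‖ :=
        (norm_add_le _ _).trans_eq (by rw [norm_smul, hbα])
    _ ≤ 2 * ‖rankOne ℂ f f - rankOne ℂ g g‖ := by nlinarith [norm_nonneg b, norm_nonneg g]
end
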